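/- arXiv:2107.01974 — 8 statements merged into one kernel-verified Lean document; each statement's English description precedes it below -/
import Mathlib

section
/- Let n ∈ (0,3) and k > 0. If ψ₁ and ψ₂ are both classical solutions of the traveling-wave boundary-value problem (positive and twice continuously differentiable on (0,∞), right-continuous at H = 0, satisfying ψ''(H) + (2/3)·(H² + H^{n−1})^{−1}·ψ(H)^{−1/2} = 0 for all H > 0, ψ(0) = k², and ψ'(H) → 0 as H → ∞), then ψ₁(H) = ψ₂(H) for all H ≥ 0. -/
open Filter Topology Set

/-- A classical solution of the traveling-wave boundary-value problem:
`ψ : [0,∞) → ℝ` is positive and twice continuously differentiable on `(0,∞)`,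
right-continuous at `H = 0`, satisfies
`ψ'' + (2/3)·(H² + H^{n−1})⁻¹·ψ^{−1/2} = 0` for all `H > 0`, `ψ(0) = k²`,
and `ψ'(H) → 0` as `H → ∞`. -/
def IsClassicalTWSolution (n k : ℝ) (ψ : ℝ → ℝ) : Prop :=
  (∀ H > (0 : ℝ), 0 < ψ H) ∧
  ContDiffOn ℝ 2 ψ (Set.Ioi 0) ∧
  ContinuousWithinAt ψ (Set.Ici 0) 0 ∧
  (∀ H > (0 : ℝ),
    deriv (deriv ψ) H + 2 / 3 * (H ^ 2 + H ^ (n - 1))⁻¹ * ψ H ^ (-(1 / 2) : ℝ) = 0) ∧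
  ψ 0 = k ^ 2 ∧
  Tendsto (deriv ψ) atTop (𝓝 0)

/-! The difference `w = ψ₁ - ψ₂` vanishes at `0`, satisfies `w' → 0` at infinity, and has
`w'' > 0` wherever `w > 0`, since `ψ ↦ ψ^{-1/2}` is decreasing and `(H² + H^{n-1})⁻¹ > 0`.
Such a function has no positive interior maximum, so if `w (H₀) > 0` then on every `[0, R]`
with `R ≥ H₀` the maximum of `w` sits at `R`, i.e. `w` is nondecreasing on `[H₀, ∞)`. There `w'`
is strictly increasing with limit `0`, hence negative: a contradiction. By symmetry `w = 0`. -/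

theorem IsLocalMax.deriv_deriv_nonpos {f : ℝ → ℝ} {x : ℝ} (hmax : IsLocalMax f x)
    (hc : ContinuousAt f x) : deriv (deriv f) x ≤ 0 := by
  by_contra! hpos
  have hmin : IsLocalMin f x := isLocalMin_of_deriv_deriv_pos hpos hmax.deriv_eq_zero hc
  have hconst : f =ᶠ[𝓝 x] fun _ => f x := by
    filter_upwards [hmax, hmin] with y hy₁ hy₂ using le_antisymm hy₁ hy₂
  refine hpos.ne' ?_
  rw [hconst.deriv.deriv_eq]
  simp

theorem le_max_zero_of_deriv_deriv_pos_of_pos {f : ℝ → ℝ} {a b : ℝ} (hab : a ≤ b)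
    (hf : ContinuousOn f (Icc a b)) (ha : f a ≤ 0)
    (hpos : ∀ x ∈ Ioo a b, 0 < f x → 0 < deriv (deriv f) x) :
    ∀ x ∈ Icc a b, f x ≤ max (f b) 0 := by
  obtain ⟨t, ht, hmax⟩ := isCompact_Icc.exists_isMaxOn (nonempty_Icc.2 hab) hf
  suffices f t ≤ max (f b) 0 from fun x hx => (hmax hx).trans this
  by_contra! hlt
  have hft : 0 < f t := (le_max_right _ _).trans_lt hlt
  have hta : a < t := ht.1.lt_of_ne (by rintro rfl; linarith)
  have htb : t < b := ht.2.lt_of_ne (by rintro rfl; exact (le_max_left _ _).not_gt hlt)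
  have hnhds : Icc a b ∈ 𝓝 t := Icc_mem_nhds hta htb
  have := (hmax.isLocalMax hnhds).deriv_deriv_nonpos (hf.continuousAt hnhds)
  linarith [hpos t ⟨hta, htb⟩ hft]

theorem StrictMonoOn.lt_of_tendsto_atTop {g : ℝ → ℝ} {a L : ℝ} (hg : StrictMonoOn g (Ioi a))
    (hlim : Tendsto g atTop (𝓝 L)) {x : ℝ} (hx : a < x) : g x < L :=
  calc g x < g (x + 1) := hg hx (by simp only [mem_Ioi]; linarith) (lt_add_one x)
    _ ≤ L := ge_of_tendsto hlim <| by
      filter_upwards [eventually_ge_atTop (x + 1)] with y hy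
      exact hg.monotoneOn (by simp only [mem_Ioi]; linarith) (by simp only [mem_Ioi]; linarith) hy

theorem nonpos_of_deriv_deriv_pos_of_pos {f : ℝ → ℝ} {a : ℝ} (hf : ContinuousOn f (Ici a))
    (hd : ContDiffOn ℝ 2 f (Ioi a)) (ha : f a ≤ 0)
    (hpos : ∀ x ∈ Ioi a, 0 < f x → 0 < deriv (deriv f) x)
    (hlim : Tendsto (deriv f) atTop (𝓝 0)) :
    ∀ x ∈ Ici a, f x ≤ 0 := by
  intro x₀ hx₀
  by_contra! hfx₀
  have hax₀ : a < x₀ := hx₀.lt_of_ne (by rintro rfl; linarith)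
  have hmono : MonotoneOn f (Ici x₀) := by
    intro s hs R hR hsR
    have hmax := le_max_zero_of_deriv_deriv_pos_of_pos (hax₀.le.trans (hs.trans hsR))
      (hf.mono Icc_subset_Ici_self) ha (fun x hx => hpos x hx.1)
    have hfR : 0 < f R := by
      have := hfx₀.trans_le (hmax x₀ ⟨hax₀.le, hs.trans hsR⟩)
      simpa [lt_max_iff] using this
    simpa [max_eq_left hfR.le] using hmax s ⟨hax₀.le.trans hs, hsR⟩
  have hderiv_strictMono : StrictMonoOn (deriv f) (Ioi x₀) := by
    refine strictMonoOn_of_deriv_pos (convex_Ioi x₀)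
      ((hd.continuousOn_deriv_of_isOpen isOpen_Ioi (by norm_num)).mono (Ioi_subset_Ioi hax₀.le))
      fun x hx => ?_
    rw [interior_Ioi] at hx
    exact hpos x (hax₀.trans hx) (hfx₀.trans_le (hmono self_mem_Ici (mem_Ici.2 hx.le) hx.le))
  have hderiv_nonneg : 0 ≤ deriv f (x₀ + 1) := by
    rw [← derivWithin_of_isOpen isOpen_Ioi (lt_add_one x₀)]
    exact (hmono.mono Ioi_subset_Ici_self).derivWithin_nonneg
  linarith [hderiv_strictMono.lt_of_tendsto_atTop hlim (lt_add_one x₀)]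

namespace IsClassicalTWSolution

variable {n k : ℝ} {ψ ψ₁ ψ₂ : ℝ → ℝ}

theorem continuousOn_Ici (h : IsClassicalTWSolution n k ψ) : ContinuousOn ψ (Ici 0) := by
  intro x hx
  rcases (mem_Ici.1 hx).eq_or_lt with rfl | hx
  · exact h.2.2.1
  · exact (h.2.1.continuousOn.continuousAt (Ioi_mem_nhds hx)).continuousWithinAt

theorem deriv_deriv_sub_pos {k₁ k₂ : ℝ} (h₁ : IsClassicalTWSolution n k₁ ψ₁)
    (h₂ : IsClassicalTWSolution n k₂ ψ₂) {x : ℝ} (hx : 0 < x) (hlt : ψ₂ x < ψ₁ x) :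
    0 < deriv (deriv (ψ₁ - ψ₂)) x := by
  have hsub : deriv (deriv (ψ₁ - ψ₂)) x = deriv (deriv ψ₁) x - deriv (deriv ψ₂) x := by
    simpa only [iteratedDeriv_succ, iteratedDeriv_zero] using
      iteratedDeriv_sub (n := 2) (h₁.2.1.contDiffAt (Ioi_mem_nhds hx))
        (h₂.2.1.contDiffAt (Ioi_mem_nhds hx))
  have hcoeff : 0 < 2 / 3 * (x ^ 2 + x ^ (n - 1))⁻¹ := by
    have := Real.rpow_pos_of_pos hx (n - 1)
    positivity
  have hpow : ψ₁ x ^ (-(1 / 2) : ℝ) < ψ₂ x ^ (-(1 / 2) : ℝ) :=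
    Real.rpow_lt_rpow_of_neg (h₂.1 x hx) hlt (by norm_num)
  rw [hsub]
  nlinarith [h₁.2.2.2.1 x hx, h₂.2.2.2.1 x hx, mul_lt_mul_of_pos_left hpow hcoeff]

theorem tendsto_deriv_sub (h₁ : IsClassicalTWSolution n k ψ₁) (h₂ : IsClassicalTWSolution n k ψ₂) :
    Tendsto (deriv (ψ₁ - ψ₂)) atTop (𝓝 0) := by
  have hev : deriv ψ₁ - deriv ψ₂ =ᶠ[atTop] deriv (ψ₁ - ψ₂) := by
    filter_upwards [eventually_gt_atTop 0] with x hx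
    exact (deriv_sub (h₁.2.1.differentiableOn (by norm_num) |>.differentiableAt (Ioi_mem_nhds hx))
      (h₂.2.1.differentiableOn (by norm_num) |>.differentiableAt (Ioi_mem_nhds hx))).symm
  simpa using (h₁.2.2.2.2.2.sub h₂.2.2.2.2.2).congr' hev

theorem le (h₁ : IsClassicalTWSolution n k ψ₁) (h₂ : IsClassicalTWSolution n k ψ₂) :
    ∀ H ≥ 0, ψ₁ H ≤ ψ₂ H := fun H hH =>
  sub_nonpos.1 <| nonpos_of_deriv_deriv_pos_of_pos (h₁.continuousOn_Ici.sub h₂.continuousOn_Ici)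
    (h₁.2.1.sub h₂.2.1) (by simp [h₁.2.2.2.2.1, h₂.2.2.2.2.1])
    (fun x hx hpos => h₁.deriv_deriv_sub_pos h₂ hx (sub_pos.1 hpos))
    (h₁.tendsto_deriv_sub h₂) H hH

end IsClassicalTWSolution

theorem uniqueness_traveling_wave_general (n k : ℝ)
    (ψ₁ ψ₂ : ℝ → ℝ)
    (h₁ : IsClassicalTWSolution n k ψ₁) (h₂ : IsClassicalTWSolution n k ψ₂) :
    ∀ H ≥ (0 : ℝ), ψ₁ H = ψ₂ H :=
  fun H hH => le_antisymm (h₁.le h₂ H hH) (h₂.le h₁ H hH)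

/-- Uniqueness of classical solutions of the traveling-wave boundary-value problem:
any two classical solutions agree on `[0,∞)`. -/
theorem uniqueness_traveling_wave (n k : ℝ) (hn : n ∈ Set.Ioo (0 : ℝ) 3) (hk : 0 < k)
    (ψ₁ ψ₂ : ℝ → ℝ)
    (h₁ : IsClassicalTWSolution n k ψ₁) (h₂ : IsClassicalTWSolution n k ψ₂) :
    ∀ H ≥ (0 : ℝ), ψ₁ H = ψ₂ H :=
  uniqueness_traveling_wave_general n k ψ₁ ψ₂ h₁ h₂
end

section
/- Let n ∈ (0,3) and k > 0, and let H : [0,∞) → ℝ be three times continuously differentiable on (0,∞) with H and H' continuous at x = 0, satisfying (H(x)² + H(x)^{n−1})·H'''(x) = −1/3 for all x > 0, H(0) = 0, H'(0) = k > 0, and H''(x) → 0 as x → ∞, and with H(x) > 0 for all sufficiently small x > 0. Then for all x > 0: H(x) > 0, H'''(x) < 0, H''(x) > 0, and H'(x) > 0; in particular H is strictly increasing on [0,∞). -/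
/-!
Since `deriv H 0 = k ≠ 0`, `H` is differentiable at `0`, hence continuous there and positive
just to the right of `0`. The coefficient `H² + H^{n-1}` is then positive on `(0, ∞)`: for
`n = 1` it is `H² + 1`, and otherwise the equation forbids `H = 0`, so `H` keeps its sign there.
Hence `H''' < 0`, so `H''` decreases strictly to its limit `0` and is positive; then `H'`
increases strictly from `H'(0⁺) = k > 0`, and `H` increases strictly from `H(0) = 0`.
-/

open Filter Topology Set

lemma eventually_pos_nhdsGT_of_hasDerivAt {f : ℝ → ℝ} {f' a : ℝ}
    (hf : HasDerivAt f f' a) (ha : f a = 0) (hf' : 0 < f') : ∀ᶠ x in 𝓝[>] a, 0 < f x := by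
  have hslope : Tendsto (slope f a) (𝓝[>] a) (𝓝 f') :=
    (hasDerivWithinAt_iff_tendsto_slope' (lt_irrefl a)).1 hf.hasDerivWithinAt
  filter_upwards [hslope.eventually (lt_mem_nhds hf'), self_mem_nhdsWithin] with x hx hax
  rw [slope_def_field, ha, sub_zero] at hx
  exact (div_pos_iff_of_pos_right (sub_pos.2 hax)).1 hx

lemma IsPreconnected.pos_of_ne_zero {X α : Type*} [TopologicalSpace X] [LinearOrder α] [Zero α]
    [TopologicalSpace α] [OrderClosedTopology α] {s : Set X} (hs : IsPreconnected s) {f : X → α}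
    (hf : ContinuousOn f s) (hne : ∀ x ∈ s, f x ≠ 0) {a : X} (ha : a ∈ s) (hfa : 0 < f a) :
    ∀ x ∈ s, 0 < f x := by
  intro x hx
  by_contra! hfx
  obtain ⟨c, hc, hfc⟩ := hs.intermediate_value hx ha hf ⟨hfx, hfa.le⟩
  exact hne c hc hfc

section LimitBounds

variable {α β : Type*} [LinearOrder α] [NoMaxOrder α] [Preorder β] [TopologicalSpace β]
  [ClosedIicTopology β] {f : α → β} {a x : α} {l : β}

lemma StrictAntiOn.lt_of_tendsto_atTop (hf : StrictAntiOn f (Ioi a))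
    (hl : Tendsto f atTop (𝓝 l)) (hx : a < x) : l < f x := by
  have : Nonempty α := ⟨a⟩
  obtain ⟨m, hxm⟩ := exists_gt x
  have ham := hx.trans hxm
  calc l ≤ f m := le_of_tendsto hl <| by
          filter_upwards [eventually_gt_atTop m] with y hy
          exact (hf ham (ham.trans hy) hy).le
    _ < f x := hf hx ham hxm

lemma StrictMonoOn.lt_of_tendsto_nhdsGT [TopologicalSpace α] [OrderTopology α]
    [DenselyOrdered α] (hf : StrictMonoOn f (Ioi a)) (hl : Tendsto f (𝓝[>] a) (𝓝 l))
    (hx : a < x) : l < f x := by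
  obtain ⟨m, ham, hmx⟩ := exists_between hx
  calc l ≤ f m := le_of_tendsto hl <| by
          filter_upwards [Ioo_mem_nhdsGT ham] with y hy
          exact (hf hy.1 ham hy.2).le
    _ < f x := hf ham hx hmx

end LimitBounds

lemma travelingWave_coeff_pos {n : ℝ} {H : ℝ → ℝ} (hH : ContinuousOn H (Ioi 0))
    (hode : ∀ x > (0 : ℝ), (H x ^ 2 + H x ^ (n - 1)) * deriv (deriv (deriv H)) x = -(1 / 3))
    (hpos : ∀ᶠ x in 𝓝[>] (0 : ℝ), 0 < H x) {x : ℝ} (hx : 0 < x) :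
    0 < H x ^ 2 + H x ^ (n - 1) := by
  rcases eq_or_ne n 1 with rfl | hn
  · rw [sub_self, Real.rpow_zero]
    positivity
  have hne : ∀ y ∈ Ioi (0 : ℝ), H y ≠ 0 := fun y hy hy0 ↦ by
    simpa [hy0, Real.zero_rpow (sub_ne_zero.2 hn)] using hode y hy
  obtain ⟨a, hHa, ha⟩ := (hpos.and self_mem_nhdsWithin).exists
  have hHx := isPreconnected_Ioi.pos_of_ne_zero hH hne ha hHa x hx
  positivity

theorem traveling_wave_profile_monotone_general (n k : ℝ)
    (hk : 0 < k) (H : ℝ → ℝ)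
    (hreg : ContDiffOn ℝ 3 H (Set.Ioi 0))
    (hcont' : ContinuousWithinAt (deriv H) (Set.Ici 0) 0)
    (hode : ∀ x > (0 : ℝ),
      (H x ^ 2 + H x ^ (n - 1)) * deriv (deriv (deriv H)) x = -(1 / 3))
    (h0 : H 0 = 0)
    (h'0 : deriv H 0 = k)
    (hbulk : Tendsto (deriv (deriv H)) atTop (𝓝 0)) :
    (∀ x > (0 : ℝ),
      0 < H x ∧ deriv (deriv (deriv H)) x < 0 ∧ 0 < deriv (deriv H) x ∧ 0 < deriv H x) ∧
    StrictMonoOn H (Set.Ici 0) := by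
  have hH0 : HasDerivAt H k 0 :=
    h'0 ▸ (differentiableAt_of_deriv_ne_zero (h'0 ▸ hk.ne')).hasDerivAt
  have hH1 : ContDiffOn ℝ 2 (deriv H) (Ioi 0) := hreg.deriv_of_isOpen isOpen_Ioi (by norm_num)
  have hH2 : ContDiffOn ℝ 1 (deriv (deriv H)) (Ioi 0) :=
    hH1.deriv_of_isOpen isOpen_Ioi (by norm_num)
  have hH3_neg : ∀ x > (0 : ℝ), deriv (deriv (deriv H)) x < 0 := fun x hx ↦
    neg_of_mul_neg_right ((hode x hx).trans_lt (by norm_num))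
      (travelingWave_coeff_pos hreg.continuousOn hode
        (eventually_pos_nhdsGT_of_hasDerivAt hH0 h0 hk) hx).le
  have hH2_pos : ∀ x > (0 : ℝ), 0 < deriv (deriv H) x := fun x hx ↦
    (strictAntiOn_of_deriv_neg (convex_Ioi 0) hH2.continuousOn (by rwa [interior_Ioi])
      ).lt_of_tendsto_atTop hbulk hx
  have hH1_lim : Tendsto (deriv H) (𝓝[>] 0) (𝓝 k) :=
    h'0 ▸ hcont'.tendsto.mono_left (nhdsWithin_mono _ Ioi_subset_Ici_self)
  have hH1_pos : ∀ x > (0 : ℝ), 0 < deriv H x := fun x hx ↦ hk.trans <|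
    (strictMonoOn_of_deriv_pos (convex_Ioi 0) hH1.continuousOn (by rwa [interior_Ioi])
      ).lt_of_tendsto_nhdsGT hH1_lim hx
  have hHcont : ContinuousOn H (Ici 0) := by
    intro x hx
    rcases (mem_Ici.1 hx).eq_or_lt with rfl | hx
    · exact hH0.continuousAt.continuousWithinAt
    · exact (hreg.continuousOn.continuousAt (Ioi_mem_nhds hx)).continuousWithinAt
  have hmono : StrictMonoOn H (Ici 0) :=
    strictMonoOn_of_deriv_pos (convex_Ici 0) hHcont (by rwa [interior_Ici])
  exact ⟨fun x hx ↦ ⟨h0 ▸ hmono self_mem_Ici hx.le hx, hH3_neg x hx, hH2_pos x hx,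
    hH1_pos x hx⟩, hmono⟩

/-- Monotonicity and sign properties of the traveling-wave profile `H` solving the
scaled third-order problem `(H² + H^{n−1})·H''' = −1/3` on `(0,∞)` with
`H(0) = 0`, `H'(0) = k > 0`, `H''(x) → 0` as `x → ∞`, and `H > 0` near `0`:
for all `x > 0` one has `H(x) > 0`, `H'''(x) < 0`, `H''(x) > 0`, `H'(x) > 0`;
in particular `H` is strictly increasing on `[0,∞)`. -/
theorem traveling_wave_profile_monotone (n k : ℝ) (hn : n ∈ Set.Ioo (0 : ℝ) 3)
    (hk : 0 < k) (H : ℝ → ℝ)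
    (hreg : ContDiffOn ℝ 3 H (Set.Ioi 0))
    (hcont : ContinuousWithinAt H (Set.Ici 0) 0)
    (hcont' : ContinuousWithinAt (deriv H) (Set.Ici 0) 0)
    (hode : ∀ x > (0 : ℝ),
      (H x ^ 2 + H x ^ (n - 1)) * deriv (deriv (deriv H)) x = -(1 / 3))
    (h0 : H 0 = 0)
    (h'0 : deriv H 0 = k)
    (hbulk : Tendsto (deriv (deriv H)) atTop (𝓝 0))
    (hpos : ∀ᶠ x in 𝓝[>] (0 : ℝ), 0 < H x) :
    (∀ x > (0 : ℝ),
      0 < H x ∧ deriv (deriv (deriv H)) x < 0 ∧ 0 < deriv (deriv H) x ∧ 0 < deriv H x) ∧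
    StrictMonoOn H (Set.Ici 0) :=
  traveling_wave_profile_monotone_general n k hk H hreg hcont' hode h0 h'0 hbulk
end

section
/- Let n ∈ (0,3), k > 0, and ε > 0, and let ψ be positive and twice continuously differentiable on (0,ε) with ψ(H) → k² as H ↓ 0, satisfying ψ''(H) + (2/3)·(H² + H^{n−1})^{−1}·ψ(H)^{−1/2} = 0 on (0,ε). Then, as H ↓ 0: if 0 < n < 2, the derivative ψ'(H) converges to a finite limit; if n = 2, ψ'(H) = −(2/(3k))·(ln H)·(1 + o(1)); and if 2 < n < 3, ψ'(H) = (2/(3(n−2)k))·H^{2−n}·(1 + o(1)). -/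
/-!
Integrating the equation from `H` to a fixed `b` gives `ψ'(H) = ψ'(b) + ∫_H^b F`, where the
forcing `F(t) = (2/3)(t² + t^(n-1))⁻¹ ψ(t)^(-1/2)` is asymptotic to `(2/(3k)) t^(1-n)` as `t ↓ 0`,
since `ψ → k²` and `t² = o(t^(n-1))` for `n < 3`. For `n < 2` this power is integrable at `0`,
so `ψ'` has a limit. For `n ≥ 2` it is not, and `f ~ g` with `g ≥ 0` and `∫_H^b g → ∞` implies
`∫_H^b f ~ ∫_H^b g`, so `ψ'(H)` is asymptotic to
`∫_H^b (2/(3k)) t^(1-n) dt`, i.e. to `-(2/(3k)) log H`, resp. `(2/(3(n-2)k)) H^(2-n)`.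
-/

open Filter Topology Set Asymptotics MeasureTheory intervalIntegral

namespace Asymptotics

variable {f g : ℝ → ℝ} {a b : ℝ}

theorem IsLittleO.intervalIntegral_nhdsGT (hab : a < b)
    (hf : ∀ x ∈ Ioc a b, IntervalIntegrable f volume x b)
    (hg : ∀ x ∈ Ioc a b, IntervalIntegrable g volume x b) (hg0 : ∀ᶠ t in 𝓝[>] a, 0 ≤ g t)
    (hG : Tendsto (fun x ↦ ∫ t in x..b, g t) (𝓝[>] a) atTop) (h : f =o[𝓝[>] a] g) :
    (fun x ↦ ∫ t in x..b, f t) =o[𝓝[>] a] fun x ↦ ∫ t in x..b, g t := by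
  refine isLittleO_iff.2 fun δ hδ ↦ ?_
  obtain ⟨u, hau, hu⟩ := mem_nhdsGT_iff_exists_Ioc_subset.1
    ((h.def (half_pos hδ)).and hg0)
  set u' := min u b
  have hu' : a < u' := lt_min hau hab
  set K := ‖∫ t in u'..b, f t‖ + δ / 2 * ‖∫ t in u'..b, g t‖
  filter_upwards [Ioo_mem_nhdsGT hu', hG.eventually_ge_atTop (2 * K / δ)] with x hx hxG
  have hxb : x ∈ Ioc a b := ⟨hx.1, hx.2.le.trans (min_le_right _ _)⟩
  have hu'b : u' ∈ Ioc a b := ⟨hu', min_le_right _ _⟩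
  have hsub : uIcc x u' ⊆ uIcc x b :=
    uIcc_subset_uIcc_left (mem_uIcc_of_le hx.2.le (min_le_right _ _))
  have hgx : IntervalIntegrable g volume x u' := (hg x hxb).mono_set hsub
  have hnear : ‖∫ t in x..u', f t‖ ≤ δ / 2 * ∫ t in x..u', g t := by
    rw [← intervalIntegral.integral_const_mul]
    refine norm_integral_le_of_norm_le hx.2.le (ae_of_all _ fun t ht ↦ ?_) (hgx.const_mul _)
    obtain ⟨hft, hgt⟩ := hu ⟨hx.1.trans ht.1, ht.2.trans (min_le_left _ _)⟩
    simpa [Real.norm_eq_abs, abs_of_nonneg hgt] using hft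
  have hsplit (φ : ℝ → ℝ) (hφ : ∀ x ∈ Ioc a b, IntervalIntegrable φ volume x b) :
      ∫ t in x..b, φ t = (∫ t in x..u', φ t) + ∫ t in u'..b, φ t :=
    (integral_add_adjacent_intervals ((hφ x hxb).mono_set hsub) (hφ u' hu'b)).symm
  have hK : 2 * K ≤ δ * ∫ t in x..b, g t := by rwa [div_le_iff₀' hδ] at hxG
  rw [Real.norm_of_nonneg ((by positivity : (0:ℝ) ≤ 2 * K / δ).trans hxG), hsplit f hf]
  rw [hsplit g hg] at hK ⊢
  have hG' : 0 ≤ δ * (|∫ t in u'..b, g t| + ∫ t in u'..b, g t) :=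
    mul_nonneg hδ.le (by linarith [neg_abs_le (∫ t in u'..b, g t)])
  calc ‖(∫ t in x..u', f t) + ∫ t in u'..b, f t‖
      ≤ δ / 2 * (∫ t in x..u', g t) + ‖∫ t in u'..b, f t‖ :=
        (norm_add_le _ _).trans (by gcongr)
    _ ≤ δ * ((∫ t in x..u', g t) + ∫ t in u'..b, g t) := by
        simp only [K, Real.norm_eq_abs] at hK ⊢
        linarith

theorem IsEquivalent.intervalIntegral_nhdsGT (hab : a < b)
    (hf : ∀ x ∈ Ioc a b, IntervalIntegrable f volume x b)
    (hg : ∀ x ∈ Ioc a b, IntervalIntegrable g volume x b) (hg0 : ∀ᶠ t in 𝓝[>] a, 0 ≤ g t)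
    (hG : Tendsto (fun x ↦ ∫ t in x..b, g t) (𝓝[>] a) atTop) (h : f ~[𝓝[>] a] g) :
    (fun x ↦ ∫ t in x..b, f t) ~[𝓝[>] a] fun x ↦ ∫ t in x..b, g t := by
  refine (IsLittleO.intervalIntegral_nhdsGT hab (fun x hx ↦ (hf x hx).sub (hg x hx)) hg hg0 hG
    h.isLittleO).congr' ?_ EventuallyEq.rfl
  filter_upwards [Ioo_mem_nhdsGT hab] with x hx
  exact integral_sub (hf x ⟨hx.1, hx.2.le⟩) (hg x ⟨hx.1, hx.2.le⟩)

theorem IsEquivalent.intervalIntegral_nhdsGT_of_eq_add_const {T : ℝ → ℝ} {d : ℝ} (hab : a < b)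
    (hf : ∀ x ∈ Ioc a b, IntervalIntegrable f volume x b)
    (hg : ∀ x ∈ Ioc a b, IntervalIntegrable g volume x b) (hg0 : ∀ᶠ t in 𝓝[>] a, 0 ≤ g t)
    (hgT : ∀ x ∈ Ioc a b, ∫ t in x..b, g t = T x + d) (hT : Tendsto T (𝓝[>] a) atTop)
    (h : f ~[𝓝[>] a] g) :
    (fun x ↦ ∫ t in x..b, f t) ~[𝓝[>] a] T := by
  have hG : (fun x ↦ ∫ t in x..b, g t) ~[𝓝[>] a] T := by
    refine (IsEquivalent.refl.add_const_of_norm_tendsto_atTop (c := d)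
      (tendsto_norm_atTop_atTop.comp hT)).congr_left ?_
    filter_upwards [Ioc_mem_nhdsGT hab] with x hx using (hgT x hx).symm
  exact (h.intervalIntegral_nhdsGT hab hf hg hg0 (hG.symm.tendsto_atTop hT)).trans hG

end Asymptotics

theorem ContinuousOn.intervalIntegrable_of_Ioc {f : ℝ → ℝ} {a b x : ℝ}
    (hf : ContinuousOn f (Ioc a b)) (hx : x ∈ Ioc a b) : IntervalIntegrable f volume x b :=
  (hf.mono fun _ ht ↦ ⟨hx.1.trans_le ht.1, ht.2⟩).intervalIntegrable_of_Icc hx.2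

theorem tendsto_neg_mul_log_nhdsGT_zero {c : ℝ} (hc : 0 < c) :
    Tendsto (fun x ↦ -c * Real.log x) (𝓝[>] 0) atTop := by
  simpa only [neg_mul, mul_comm] using
    Real.tendsto_log_nhdsGT_zero.const_mul_atBot_of_neg (neg_lt_zero.2 hc)

section PowerLaw

variable {f : ℝ → ℝ} {b c α : ℝ}

theorem isEquivalent_integral_of_isEquivalent_rpow_neg (hb : 0 < b) (hc : 0 < c) (hα : 1 < α)
    (hf : ∀ x ∈ Ioc 0 b, IntervalIntegrable f volume x b)
    (h : f ~[𝓝[>] 0] fun t ↦ c * t ^ (-α)) :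
    (fun x ↦ ∫ t in x..b, f t) ~[𝓝[>] 0] fun x ↦ c / (α - 1) * x ^ (1 - α) := by
  have hα₁ : α - 1 ≠ 0 := (sub_pos.2 hα).ne'
  have hα₂ : 1 - α ≠ 0 := (sub_neg.2 hα).ne
  refine h.intervalIntegral_nhdsGT_of_eq_add_const (g := fun t ↦ c * t ^ (-α))
    (d := -(c / (α - 1) * b ^ (1 - α))) hb hf
    (fun x hx ↦ (continuousOn_const.mul (continuousOn_id.rpow_const fun t ht ↦
      Or.inl ht.1.ne')).intervalIntegrable_of_Ioc hx)
    (eventually_nhdsWithin_of_forall fun t ht ↦ by have : 0 < t := ht; positivity) (fun x hx ↦ ?_)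
    ((tendsto_rpow_neg_nhdsGT_zero (sub_neg.2 hα)).const_mul_atTop (div_pos hc (sub_pos.2 hα)))
  have h0 : (0 : ℝ) ∉ uIcc x b := by
    rw [uIcc_of_le hx.2]
    exact fun h ↦ hx.1.not_ge h.1
  rw [intervalIntegral.integral_const_mul, integral_rpow (Or.inr ⟨by linarith, h0⟩),
    show -α + 1 = 1 - α by ring]
  field_simp
  ring

theorem isEquivalent_integral_of_isEquivalent_inv (hb : 0 < b) (hc : 0 < c)
    (hf : ∀ x ∈ Ioc 0 b, IntervalIntegrable f volume x b)
    (h : f ~[𝓝[>] 0] fun t ↦ c * t⁻¹) :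
    (fun x ↦ ∫ t in x..b, f t) ~[𝓝[>] 0] fun x ↦ -c * Real.log x := by
  refine h.intervalIntegral_nhdsGT_of_eq_add_const (g := fun t ↦ c * t⁻¹) (d := c * Real.log b)
    hb hf
    (fun x hx ↦ (continuousOn_const.mul (continuousOn_inv₀.mono fun t ht ↦
      ht.1.ne')).intervalIntegrable_of_Ioc hx)
    (eventually_nhdsWithin_of_forall fun t ht ↦ by have : 0 < t := ht; positivity) (fun x hx ↦ ?_)
    (tendsto_neg_mul_log_nhdsGT_zero hc)
  rw [intervalIntegral.integral_const_mul, integral_inv_of_pos hx.1 hb,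
    Real.log_div hb.ne' hx.1.ne']
  ring

theorem integrableOn_Ioc_of_isBigO_rpow_neg (hb : 0 < b) (hα : α < 1)
    (hf : ContinuousOn f (Ioc 0 b)) (h : f =O[𝓝[>] 0] fun t ↦ t ^ (-α)) :
    IntegrableOn f (Ioc 0 b) := by
  obtain ⟨C, hC⟩ := h.bound
  obtain ⟨u, hu0, hu⟩ := mem_nhdsGT_iff_exists_Ioc_subset.1 hC
  set u' := min u b
  have hu' : 0 < u' := lt_min hu0 hb
  rw [← Ioc_union_Ioc_eq_Ioc hu'.le (min_le_right _ _)]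
  refine IntegrableOn.union ?_ ?_
  · refine Integrable.mono' (g := fun t ↦ C * t ^ (-α)) ?_
      ((hf.mono (Ioc_subset_Ioc_right (min_le_right _ _))).aestronglyMeasurable measurableSet_Ioc)
      ((ae_restrict_mem measurableSet_Ioc).mono fun t ht ↦ ?_)
    · change IntegrableOn (fun t ↦ C * t ^ (-α)) (Ioc 0 u')
      rw [integrableOn_Ioc_iff_integrableOn_Ioo]
      exact ((integrableOn_Ioo_rpow_iff hu').2 (by linarith)).const_mul C
    · simpa [abs_of_pos (Real.rpow_pos_of_pos ht.1 _)] using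
        hu ⟨ht.1, ht.2.trans (min_le_left _ _)⟩
  · exact ((hf.mono fun t ht ↦ ⟨hu'.trans_le ht.1, ht.2⟩).integrableOn_Icc).mono_set
      Ioc_subset_Icc_self

theorem tendsto_integral_of_isBigO_rpow_neg (hb : 0 < b) (hα : α < 1)
    (hf : ContinuousOn f (Ioc 0 b)) (h : f =O[𝓝[>] 0] fun t ↦ t ^ (-α)) :
    Tendsto (fun x ↦ ∫ t in x..b, f t) (𝓝[>] 0) (𝓝 (∫ t in 0..b, f t)) := by
  have hint : IntegrableOn f (uIcc 0 b) := by
    rw [uIcc_of_le hb.le, integrableOn_Icc_iff_integrableOn_Ioc]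
    exact integrableOn_Ioc_of_isBigO_rpow_neg hb hα hf h
  rw [← nhdsWithin_Ioo_eq_nhdsGT hb]
  exact ((continuousOn_primitive_interval_left hint) 0 left_mem_uIcc).tendsto.mono_left
    (nhdsWithin_mono _ (Ioo_subset_Icc_self.trans (uIcc_of_le hb.le).symm.subset))

end PowerLaw

theorem deriv_eq_add_integral_of_deriv_deriv_eq_neg {ψ φ : ℝ → ℝ} {a c x b : ℝ}
    (hψ : ContDiffOn ℝ 2 ψ (Ioo a c)) (hφ : ∀ t ∈ Ioo a c, deriv (deriv ψ) t = -φ t)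
    (hx : x ∈ Ioo a c) (hb : b ∈ Ioo a c) :
    deriv ψ x = deriv ψ b + ∫ t in x..b, φ t := by
  have hsub : uIcc x b ⊆ Ioo a c := ordConnected_Ioo.uIcc_subset hx hb
  have hψ' : ContDiffOn ℝ 1 (deriv ψ) (Ioo a c) := hψ.deriv_of_isOpen isOpen_Ioo (by norm_num)
  have hFTC := integral_deriv_eq_sub' (deriv ψ) rfl
    (fun t ht ↦ (hψ'.differentiableOn one_ne_zero t (hsub ht)).differentiableAt
      (isOpen_Ioo.mem_nhds (hsub ht)))
    ((hψ'.continuousOn_deriv_of_isOpen isOpen_Ioo le_rfl).mono hsub)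
  rw [integral_congr fun t ht ↦ hφ t (hsub ht), intervalIntegral.integral_neg] at hFTC
  linarith

namespace ContactLine

variable {n k : ℝ} {ψ : ℝ → ℝ}

noncomputable def forcing (n : ℝ) (ψ : ℝ → ℝ) (H : ℝ) : ℝ :=
  2 / 3 * (H ^ 2 + H ^ (n - 1))⁻¹ * ψ H ^ (-(1 / 2) : ℝ)

theorem continuousOn_forcing {s : Set ℝ} (hs : s ⊆ Ioi 0) (hψ : ContinuousOn ψ s)
    (hpos : ∀ t ∈ s, 0 < ψ t) : ContinuousOn (forcing n ψ) s := by
  have hrpow : ContinuousOn (fun t : ℝ ↦ t ^ (n - 1)) s :=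
    continuousOn_id.rpow_const fun t ht ↦ Or.inl (hs ht).ne'
  refine (continuousOn_const.mul ((continuousOn_pow 2).add hrpow |>.inv₀ fun t ht ↦ ?_)).mul
    (hψ.rpow_const fun t ht ↦ Or.inl (hpos t ht).ne')
  have : 0 < t ^ (n - 1) := Real.rpow_pos_of_pos (hs ht) _
  simp only [Pi.add_apply]
  positivity

theorem isEquivalent_forcing (hn : n < 3) (hk : 0 < k)
    (hlim : Tendsto ψ (𝓝[>] 0) (𝓝 (k ^ 2))) :
    forcing n ψ ~[𝓝[>] 0] fun t ↦ 2 / (3 * k) * t ^ (-(n - 1)) := by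
  have hpow : Tendsto (fun t : ℝ ↦ t ^ (3 - n)) (𝓝[>] 0) (𝓝 0) := by
    simpa [Real.zero_rpow (sub_pos.2 hn).ne'] using
      ((Real.continuousAt_rpow_const 0 (3 - n) (Or.inr (sub_pos.2 hn).le)).tendsto.mono_left
        nhdsWithin_le_nhds)
  have hsqrt : (k ^ 2) ^ (-(1 / 2) : ℝ) = k⁻¹ := by
    rw [Real.rpow_neg (by positivity), ← Real.sqrt_eq_rpow, Real.sqrt_sq hk.le]
  have hcoef : Tendsto (fun t ↦ 2 / 3 * (t ^ (3 - n) + 1)⁻¹ * ψ t ^ (-(1 / 2) : ℝ)) (𝓝[>] 0)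
      (𝓝 (2 / (3 * k))) := by
    convert (tendsto_const_nhds.mul ((hpow.add_const 1).inv₀ (by norm_num))).mul
      (hlim.rpow_const (Or.inl (by positivity))) using 2
    rw [hsqrt]
    field_simp
    norm_num
  refine (((isEquivalent_const_iff_tendsto (by positivity)).2 hcoef).mul
    (IsEquivalent.refl (u := fun t : ℝ ↦ t ^ (-(n - 1))))).congr_left ?_
  filter_upwards [self_mem_nhdsWithin] with t (ht : 0 < t)
  have hsum : t ^ 2 + t ^ (n - 1) = t ^ (n - 1) * (t ^ (3 - n) + 1) := by
    rw [mul_add, mul_one, ← Real.rpow_add ht, show n - 1 + (3 - n) = ((2 : ℕ) : ℝ) by norm_num,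
      Real.rpow_natCast]
  simp only [forcing, Pi.mul_apply, hsum, mul_inv, Real.rpow_neg ht.le]
  ring

end ContactLine

/-- Asymptotics of `ψ'` as `H ↓ 0` for positive `C²` solutions of the traveling-wave ODE
`ψ'' + (2/3)·(H² + H^{n−1})⁻¹·ψ^{−1/2} = 0` on `(0,ε)` with `ψ(H) → k²` as `H ↓ 0`:
if `0 < n < 2` then `ψ'` converges to a finite limit; if `n = 2` then
`ψ'(H) = −(2/(3k))·ln H·(1+o(1))`; if `2 < n < 3` then
`ψ'(H) = (2/(3(n−2)k))·H^{2−n}·(1+o(1))`. -/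
theorem derivative_asymptotics_contact_line (n k ε : ℝ) (hn : n ∈ Set.Ioo (0 : ℝ) 3)
    (hk : 0 < k) (hε : 0 < ε) (ψ : ℝ → ℝ)
    (hpos : ∀ H ∈ Set.Ioo (0 : ℝ) ε, 0 < ψ H)
    (hreg : ContDiffOn ℝ 2 ψ (Set.Ioo 0 ε))
    (hlim : Tendsto ψ (𝓝[>] (0 : ℝ)) (𝓝 (k ^ 2)))
    (hode : ∀ H ∈ Set.Ioo (0 : ℝ) ε,
      deriv (deriv ψ) H + 2 / 3 * (H ^ 2 + H ^ (n - 1))⁻¹ * ψ H ^ (-(1 / 2) : ℝ) = 0) :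
    (n < 2 → ∃ L : ℝ, Tendsto (deriv ψ) (𝓝[>] (0 : ℝ)) (𝓝 L)) ∧
    (n = 2 →
      (fun H => deriv ψ H - (-(2 / (3 * k)) * Real.log H)) =o[𝓝[>] (0 : ℝ)]
        fun H => Real.log H) ∧
    (2 < n →
      (fun H => deriv ψ H - 2 / (3 * (n - 2) * k) * H ^ (2 - n)) =o[𝓝[>] (0 : ℝ)]
        fun H => H ^ (2 - n)) := by
  open ContactLine in
  obtain ⟨b, hb⟩ := nonempty_Ioo.2 hε
  have hIoc : Ioc 0 b ⊆ Ioo 0 ε := fun t ht ↦ ⟨ht.1, ht.2.trans_lt hb.2⟩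
  have hφ : ContinuousOn (forcing n ψ) (Ioc 0 b) :=
    continuousOn_forcing (fun t ht ↦ ht.1) (hreg.continuousOn.mono hIoc) fun t ht ↦ hpos t (hIoc ht)
  have hφi (x : ℝ) (hx : x ∈ Ioc 0 b) := hφ.intervalIntegrable_of_Ioc hx
  have hrep : (fun x ↦ deriv ψ b + ∫ t in x..b, forcing n ψ t) =ᶠ[𝓝[>] 0] deriv ψ := by
    filter_upwards [Ioo_mem_nhdsGT hb.1] with x hx
    exact (deriv_eq_add_integral_of_deriv_deriv_eq_neg hreg
      (fun t ht ↦ eq_neg_of_add_eq_zero_left (hode t ht)) ⟨hx.1, hx.2.trans hb.2⟩ hb).symm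
  have hequiv := isEquivalent_forcing hn.2 hk hlim
  have hc : 0 < 2 / (3 * k) := by positivity
  refine ⟨fun hn2 ↦ ?_, fun hn2 ↦ ?_, fun hn2 ↦ ?_⟩
  · exact ⟨_, ((tendsto_integral_of_isBigO_rpow_neg hb.1 (by linarith) hφ
      (hequiv.isBigO.trans (isBigO_const_mul_self _ _ _))).const_add _).congr' hrep⟩
  · subst hn2
    have hint := isEquivalent_integral_of_isEquivalent_inv hb.1 hc hφi
      (hequiv.congr_right (.of_forall fun t ↦ by norm_num [Real.rpow_neg_one]))
    have h := hint.const_add_of_norm_tendsto_atTop (c := deriv ψ b)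
      (tendsto_norm_atTop_atTop.comp (tendsto_neg_mul_log_nhdsGT_zero hc))
    exact (h.congr_left hrep).isLittleO.trans_isBigO (isBigO_const_mul_self _ _ _)
  · have hint := isEquivalent_integral_of_isEquivalent_rpow_neg hb.1 hc (by linarith) hφi hequiv
    have hT : Tendsto (fun x : ℝ ↦ 2 / (3 * k) / (n - 1 - 1) * x ^ (1 - (n - 1))) (𝓝[>] 0) atTop :=
      (tendsto_rpow_neg_nhdsGT_zero (by linarith)).const_mul_atTop (div_pos hc (by linarith))
    have h := hint.const_add_of_norm_tendsto_atTop (c := deriv ψ b)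
      (tendsto_norm_atTop_atTop.comp hT)
    refine ((h.congr_left hrep).congr_right (.of_forall fun x ↦ ?_)).isLittleO.trans_isBigO
      (isBigO_const_mul_self _ _ _)
    rw [show 1 - (n - 1) = 2 - n by ring, show n - 1 - 1 = n - 2 by ring, div_div,
      mul_right_comm]
end

section
/- Let n ∈ (0,3) and k > 0, and let μ : ℝ → ℝ be twice continuously differentiable with 1 + μ(s) > 0 for all s, satisfying μ''(s) − μ'(s) + (2/(3k³(1+e^{−(3−n)s})))·(1+μ(s))^{−1/2} = 0 for all s ∈ ℝ and μ(s) → 0 as s → −∞. Define q(s) := e^{−((3−n)/3)s}·μ(s) and p(s) := e^{−((3−n)/3)s}·μ'(s). Then, as s → −∞: if 0 < n < 2, q(s) = O(e^{(n/3)s}) and p(s) = O(e^{(n/3)s}); if n = 2, q(s) = −(2/(3k³))·s·e^{(2/3)s}·(1+o(1)) and p(s) = −(2/(3k³))·s·e^{(2/3)s}·(1+o(1)); if 2 < n < 3, q(s) = (2/(3(3−n)(n−2)k³))·e^{(2(3−n)/3)s}·(1+o(1)) and p(s) = (2/(3(n−2)k³))·e^{(2(3−n)/3)s}·(1+o(1)).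 In particular (e^{((3−n)/3)s}, q(s), p(s)) → (0,0,0) as s → −∞. -/
open Filter Topology Set Asymptotics

/-!
Write `D = μ'` and `g` for the forcing term, so that the ODE is the linear equation `D' = D - g`,
i.e. `(e^{-s} D)' = -e^{-s} g`, and `g(s) = (2/(3k³)) e^{(3-n)s} (1 + o(1))` because `μ → 0`.
Asymptotic relations between derivatives integrate along half-lines `(-∞, T]`: if `|F'| ≤ C H'`
there, then `|F b - F a| ≤ C (H b - H a)`. The integrand `e^{-s} g ≍ e^{(2-n)s}` is integrable
at `-∞` for `n < 2`, so `e^{-s} D` stays bounded; for `n ≥ 2` its primitive diverges and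
dominates, which gives `D` up to `o(·)`. Integrating `D` once more from `-∞`, where `μ → 0`,
gives `μ`, and the weight `e^{-((3-n)/3)s}` only shifts exponents.
-/

theorem abs_sub_le_mul_sub_of_abs_deriv_le {F H f h : ℝ → ℝ} {C a b : ℝ}
    (hF : ∀ t, HasDerivAt F (f t) t) (hH : ∀ t, HasDerivAt H (h t) t)
    (hfh : ∀ t ∈ Ico a b, |f t| ≤ C * h t) (hab : a ≤ b) :
    |F b - F a| ≤ C * (H b - H a) := by
  refine image_norm_le_of_norm_deriv_right_le_deriv_boundary (f := fun t => F t - F a)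
    (fun t _ => ((hF t).sub_const (F a)).continuousAt.continuousWithinAt)
    (fun t _ => ((hF t).sub_const (F a)).hasDerivWithinAt) (by simp)
    (fun t => ((hH t).sub_const (H a)).const_mul C) hfh ⟨hab, le_rfl⟩

namespace Asymptotics

theorem exists_forall_abs_sub_le_of_isBigOWith {F H f h : ℝ → ℝ} {C : ℝ}
    (hF : ∀ t, HasDerivAt F (f t) t) (hH : ∀ t, HasDerivAt H (h t) t)
    (hf : IsBigOWith C atBot f h) (hh : ∀ᶠ t in atBot, 0 ≤ h t) :
    ∃ T, ∀ a b, a ≤ b → b ≤ T → |F b - F a| ≤ C * (H b - H a) := by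
  obtain ⟨T, hT⟩ := (hf.bound.and hh).exists_forall_of_atBot
  refine ⟨T, fun a b hab hbT => abs_sub_le_mul_sub_of_abs_deriv_le hF hH (fun t ht => ?_) hab⟩
  obtain ⟨hft, hht⟩ := hT t (ht.2.le.trans hbT)
  rwa [Real.norm_eq_abs, Real.norm_of_nonneg hht] at hft

theorem IsBigOWith.of_hasDerivAt_of_tendsto_zero {F H f h : ℝ → ℝ} {C : ℝ} (hC : 0 ≤ C)
    (hF : ∀ t, HasDerivAt F (f t) t) (hH : ∀ t, HasDerivAt H (h t) t)
    (hf : IsBigOWith C atBot f h) (hh : ∀ᶠ t in atBot, 0 ≤ h t)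
    (hF0 : Tendsto F atBot (𝓝 0)) (hH0 : Tendsto H atBot (𝓝 0)) :
    IsBigOWith C atBot F H := by
  obtain ⟨T, hT⟩ := exists_forall_abs_sub_le_of_isBigOWith hF hH hf hh
  refine IsBigOWith.of_bound (eventually_atBot.2 ⟨T, fun s hs => ?_⟩)
  have hlim : Tendsto (fun r => C * (H s - H r) - |F s - F r|) atBot
      (𝓝 (C * (H s - 0) - |F s - 0|)) :=
    ((tendsto_const_nhds.sub hH0).const_mul C).sub (tendsto_const_nhds.sub hF0).abs
  have hle : |F s| ≤ C * H s := by
    simpa using ge_of_tendsto hlim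
      (eventually_atBot.2 ⟨s, fun r hr => sub_nonneg.2 (hT r s hr hs)⟩)
  rw [Real.norm_eq_abs, Real.norm_eq_abs]
  exact hle.trans (mul_le_mul_of_nonneg_left (le_abs_self _) hC)

theorem IsLittleO.of_hasDerivAt_of_tendsto_zero {F H f h : ℝ → ℝ}
    (hF : ∀ t, HasDerivAt F (f t) t) (hH : ∀ t, HasDerivAt H (h t) t)
    (hf : f =o[atBot] h) (hh : ∀ᶠ t in atBot, 0 ≤ h t)
    (hF0 : Tendsto F atBot (𝓝 0)) (hH0 : Tendsto H atBot (𝓝 0)) :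
    F =o[atBot] H :=
  isLittleO_iff_forall_isBigOWith.2 fun _ hc =>
    .of_hasDerivAt_of_tendsto_zero hc.le hF hH (hf.forall_isBigOWith hc) hh hF0 hH0

theorem IsBigO.of_hasDerivAt_of_tendsto_zero {F H f h : ℝ → ℝ}
    (hF : ∀ t, HasDerivAt F (f t) t) (hH : ∀ t, HasDerivAt H (h t) t)
    (hf : f =O[atBot] h) (hh : ∀ᶠ t in atBot, 0 ≤ h t)
    (hF0 : Tendsto F atBot (𝓝 0)) (hH0 : Tendsto H atBot (𝓝 0)) :
    F =O[atBot] H := by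
  obtain ⟨C, hC, hfC⟩ := hf.exists_nonneg
  exact (hfC.of_hasDerivAt_of_tendsto_zero hC hF hH hh hF0 hH0).isBigO

theorem IsLittleO.of_hasDerivAt_of_tendsto_atBot {F H f h : ℝ → ℝ}
    (hF : ∀ t, HasDerivAt F (f t) t) (hH : ∀ t, HasDerivAt H (h t) t)
    (hf : f =o[atBot] h) (hh : ∀ᶠ t in atBot, 0 ≤ h t) (hHbot : Tendsto H atBot atBot) :
    F =o[atBot] H := by
  refine isLittleO_iff.2 fun ε hε => ?_
  obtain ⟨T, hT⟩ := exists_forall_abs_sub_le_of_isBigOWith hF hH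
    (hf.forall_isBigOWith (half_pos hε)) hh
  have hbig : ∀ᶠ s in atBot, |F T| + ε / 2 * |H T| ≤ ε / 2 * |H s| :=
    ((tendsto_abs_atBot_atTop.comp hHbot).const_mul_atTop (half_pos hε)).eventually_ge_atTop _
  filter_upwards [hbig, eventually_le_atBot T] with s hs hsT
  have hTs := hT s T hsT le_rfl
  have hHTs : ε / 2 * (H T - H s) ≤ ε / 2 * |H T| + ε / 2 * |H s| := by
    nlinarith [le_abs_self (H T), neg_le_abs (H s)]
  rw [Real.norm_eq_abs, Real.norm_eq_abs]
  linarith [abs_sub_abs_le_abs_sub (F s) (F T), abs_sub_comm (F s) (F T)]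

theorem IsBigO.isBigO_one_of_hasDerivAt_of_tendsto {F H f h : ℝ → ℝ} {c : ℝ}
    (hF : ∀ t, HasDerivAt F (f t) t) (hH : ∀ t, HasDerivAt H (h t) t)
    (hf : f =O[atBot] h) (hh : ∀ᶠ t in atBot, 0 ≤ h t) (hHc : Tendsto H atBot (𝓝 c)) :
    F =O[atBot] fun _ => (1 : ℝ) := by
  obtain ⟨C, hC, hfC⟩ := hf.exists_nonneg
  obtain ⟨T, hT⟩ := exists_forall_abs_sub_le_of_isBigOWith hF hH hfC hh
  refine IsBigO.of_bound (|F T| + C * (|H T| + (|c| + 1))) ?_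
  filter_upwards [hHc.abs.eventually (ge_mem_nhds (lt_add_one |c|)), eventually_le_atBot T]
    with s hHs hsT
  have hTs := hT s T hsT le_rfl
  have hHTs : C * (H T - H s) ≤ C * (|H T| + (|c| + 1)) :=
    mul_le_mul_of_nonneg_left (by linarith [le_abs_self (H T), neg_le_abs (H s)]) hC
  rw [norm_one, mul_one, Real.norm_eq_abs]
  linarith [abs_sub_abs_le_abs_sub (F s) (F T), abs_sub_comm (F s) (F T)]

theorem IsLittleO.tendsto_zero_of_sub {l : Filter ℝ} {u r w : ℝ → ℝ}
    (h : (fun s => u s - r s) =o[l] w) (hr : r =O[l] w) (hw : Tendsto w l (𝓝 0)) :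
    Tendsto u l (𝓝 0) :=
  ((h.isBigO.add hr).congr_left fun _ => sub_add_cancel _ _).trans_tendsto hw

end Asymptotics

theorem tendsto_mul_exp_mul_atBot {c : ℝ} (hc : 0 < c) :
    Tendsto (fun s => s * Real.exp (c * s)) atBot (𝓝 0) := by
  have h := ((Real.tendsto_pow_mul_exp_neg_atTop_nhds_zero 1).comp
    (tendsto_neg_atBot_atTop.comp (tendsto_id.const_mul_atBot hc))).const_mul (-c⁻¹)
  refine (h.congr fun s => ?_).trans (by simp)
  simp [field]

theorem tendsto_exp_mul_atBot {c : ℝ} (hc : 0 < c) :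
    Tendsto (fun s => Real.exp (c * s)) atBot (𝓝 0) :=
  Real.tendsto_exp_atBot.comp (tendsto_id.const_mul_atBot hc)

theorem hasDerivAt_inv_mul_exp_mul {c : ℝ} (hc : c ≠ 0) (s : ℝ) :
    HasDerivAt (fun s => c⁻¹ * Real.exp (c * s)) (Real.exp (c * s)) s :=
  ((((hasDerivAt_id' s).const_mul c).exp).const_mul c⁻¹).congr_deriv (by field_simp)

section LinearODE

open Real

variable {α G : ℝ} {D g : ℝ → ℝ}

theorem hasDerivAt_exp_neg_mul_of_hasDerivAt_sub (hD : ∀ s, HasDerivAt D (D s - g s) s)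
    (s : ℝ) :
    HasDerivAt (fun s => exp (-s) * D s) (-(exp (-s) * g s)) s :=
  (((hasDerivAt_neg s).exp).mul (hD s)).congr_deriv (by ring)

theorem isLittleO_neg_exp_neg_mul_add_mul_exp
    (hg : (fun s => g s - G * exp (α * s)) =o[atBot] fun s => exp (α * s)) :
    (fun s => -(exp (-s) * g s) + G * exp ((α - 1) * s)) =o[atBot]
      fun s => exp ((α - 1) * s) := by
  have hexp : ∀ s, exp (-s) * exp (α * s) = exp ((α - 1) * s) := fun s => by
    rw [← exp_add]; congr 1; ring
  refine (((isBigO_refl (fun s => exp (-s)) atBot).mul_isLittleO hg).neg_left).congr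
    (fun s => ?_) hexp
  rw [← hexp]; ring

theorem isBigO_exp_of_one_lt (hα : 1 < α) (hD : ∀ s, HasDerivAt D (D s - g s) s)
    (hg : (fun s => g s - G * exp (α * s)) =o[atBot] fun s => exp (α * s)) :
    D =O[atBot] exp := by
  have hf : (fun s => -(exp (-s) * g s)) =O[atBot] fun s => exp ((α - 1) * s) :=
    ((isLittleO_neg_exp_neg_mul_add_mul_exp hg).isBigO.sub
      ((isBigO_refl _ atBot).const_mul_left G)).congr_left fun s => by ring
  have hF := hf.isBigO_one_of_hasDerivAt_of_tendsto
    (hasDerivAt_exp_neg_mul_of_hasDerivAt_sub hD)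
    (hasDerivAt_inv_mul_exp_mul (sub_ne_zero.2 hα.ne')) (.of_forall fun _ => (exp_pos _).le)
    ((tendsto_exp_mul_atBot (sub_pos.2 hα)).const_mul _)
  refine (hF.mul (isBigO_refl exp atBot)).congr (fun s => ?_) fun _ => one_mul _
  rw [mul_comm, ← mul_assoc, ← exp_add, add_neg_cancel, exp_zero, one_mul]

theorem isLittleO_exp_neg_mul_add {H : ℝ → ℝ} (hD : ∀ s, HasDerivAt D (D s - g s) s)
    (hg : (fun s => g s - G * exp (α * s)) =o[atBot] fun s => exp (α * s))
    (hH : ∀ s, HasDerivAt H (exp ((α - 1) * s)) s) (hHbot : Tendsto H atBot atBot) :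
    (fun s => exp (-s) * D s + G * H s) =o[atBot] H :=
  (isLittleO_neg_exp_neg_mul_add_mul_exp hg).of_hasDerivAt_of_tendsto_atBot
    (fun s => (hasDerivAt_exp_neg_mul_of_hasDerivAt_sub hD s).add ((hH s).const_mul G)) hH
    (.of_forall fun _ => (exp_pos _).le) hHbot

theorem isLittleO_add_mul_mul_exp (hD : ∀ s, HasDerivAt D (D s - g s) s)
    (hg : (fun s => g s - G * exp s) =o[atBot] exp) :
    (fun s => D s + G * s * exp s) =o[atBot] fun s => s * exp s := by
  have h := isLittleO_exp_neg_mul_add (α := 1) (H := fun s => s) hD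
    (by simpa only [one_mul] using hg) (fun s => (hasDerivAt_id' s).congr_deriv (by simp))
    tendsto_id
  refine ((isBigO_refl exp atBot).mul_isLittleO h).congr (fun s => ?_) fun s => mul_comm _ _
  rw [mul_add, ← mul_assoc, ← exp_add, add_neg_cancel, exp_zero]
  ring

theorem isLittleO_sub_mul_exp_of_lt_one (hα : α < 1) (hD : ∀ s, HasDerivAt D (D s - g s) s)
    (hg : (fun s => g s - G * exp (α * s)) =o[atBot] fun s => exp (α * s)) :
    (fun s => D s - G / (1 - α) * exp (α * s)) =o[atBot] fun s => exp (α * s) := by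
  have hα1 : α - 1 < 0 := sub_neg.2 hα
  have h := isLittleO_exp_neg_mul_add hD hg (hasDerivAt_inv_mul_exp_mul hα1.ne)
    ((tendsto_exp_atTop.comp (tendsto_id.const_mul_atBot_of_neg hα1)).const_mul_atTop_of_neg
      (inv_lt_zero.2 hα1))
  have hexp : ∀ s, exp s * exp ((α - 1) * s) = exp (α * s) := fun s => by
    rw [← exp_add]; congr 1; ring
  refine ((isBigO_refl exp atBot).mul_isLittleO
    (h.trans_isBigO (isBigO_const_mul_self _ _ _))).congr (fun s => ?_) hexp
  have hinv : exp s * exp (-s) = 1 := by rw [← exp_add, add_neg_cancel, exp_zero]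
  have h1α : 1 - α ≠ 0 := by linarith
  have hα1ne : α - 1 ≠ 0 := hα1.ne
  calc exp s * (exp (-s) * D s + G * ((α - 1)⁻¹ * exp ((α - 1) * s)))
      = exp s * exp (-s) * D s + G * (α - 1)⁻¹ * (exp s * exp ((α - 1) * s)) := by ring
    _ = D s - G / (1 - α) * exp (α * s) := by
      rw [hinv, hexp]; field_simp; ring

end LinearODE

section Integration

open Real

variable {μ D : ℝ → ℝ} {G c α : ℝ}

theorem isLittleO_exp_id_mul_exp : exp =o[atBot] fun s => s * exp s :=
  ((isLittleO_one_left_iff ℝ).2 (by simpa using tendsto_abs_atBot_atTop)).mul_isBigO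
    (isBigO_refl exp atBot) |>.congr_left fun s => one_mul _

theorem isLittleO_add_mul_mul_exp_of_hasDerivAt (hμ : ∀ s, HasDerivAt μ (D s) s)
    (hD : (fun s => D s + G * s * exp s) =o[atBot] fun s => s * exp s)
    (hlim : Tendsto μ atBot (𝓝 0)) :
    (fun s => μ s + G * s * exp s) =o[atBot] fun s => s * exp s := by
  have hse : Tendsto (fun s => s * exp s) atBot (𝓝 0) := by
    simpa using tendsto_mul_exp_mul_atBot one_pos
  have hF : ∀ s, HasDerivAt (fun s => μ s + G * s * exp s) (D s + G * s * exp s + G * exp s) s :=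
    fun s => ((hμ s).add (((hasDerivAt_id' s).const_mul G).mul (hasDerivAt_exp s))).congr_deriv
      (by ring)
  have hH : ∀ s, HasDerivAt (fun s => exp s - s * exp s) (-(s * exp s)) s :=
    fun s => ((hasDerivAt_exp s).sub ((hasDerivAt_id' s).mul (hasDerivAt_exp s))).congr_deriv
      (by ring)
  have hf : (fun s => D s + G * s * exp s + G * exp s) =o[atBot] fun s => -(s * exp s) :=
    isLittleO_neg_right.2 (hD.add (isLittleO_exp_id_mul_exp.const_mul_left G))
  have hh : ∀ᶠ s in atBot, 0 ≤ -(s * exp s) := by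
    filter_upwards [eventually_le_atBot 0] with s hs
    exact neg_nonneg.2 (mul_nonpos_of_nonpos_of_nonneg hs (exp_pos s).le)
  have hFH := hf.of_hasDerivAt_of_tendsto_zero hF hH hh
    (by simpa [mul_assoc] using hlim.add (hse.const_mul G))
    (by simpa using tendsto_exp_atBot.sub hse)
  exact hFH.trans_isBigO (isLittleO_exp_id_mul_exp.isBigO.sub (isBigO_refl _ atBot))

theorem isLittleO_sub_div_mul_exp_of_hasDerivAt (hα : 0 < α) (hμ : ∀ s, HasDerivAt μ (D s) s)
    (hD : (fun s => D s - c * exp (α * s)) =o[atBot] fun s => exp (α * s))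
    (hlim : Tendsto μ atBot (𝓝 0)) :
    (fun s => μ s - c / α * exp (α * s)) =o[atBot] fun s => exp (α * s) := by
  have hH := hasDerivAt_inv_mul_exp_mul hα.ne'
  have hF :
      ∀ s, HasDerivAt (fun s => μ s - c * (α⁻¹ * exp (α * s))) (D s - c * exp (α * s)) s :=
    fun s => (hμ s).sub ((hH s).const_mul c)
  have hH0 := (tendsto_exp_mul_atBot hα).const_mul α⁻¹
  rw [mul_zero] at hH0
  have hFH := hD.of_hasDerivAt_of_tendsto_zero hF hH (.of_forall fun _ => (exp_pos _).le)
    (by simpa using hlim.sub (hH0.const_mul c)) hH0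
  exact (hFH.trans_isBigO (isBigO_const_mul_self _ _ _)).congr_left fun s => by ring

end Integration

section ContactLine

open Real

noncomputable def contactLineForcing (n k : ℝ) (μ : ℝ → ℝ) (s : ℝ) : ℝ :=
  2 / (3 * k ^ 3 * (1 + exp (-(3 - n) * s))) * (1 + μ s) ^ (-(1 / 2) : ℝ)

variable {n k : ℝ} {μ D : ℝ → ℝ}

theorem isLittleO_contactLineForcing_sub (hn : n < 3) (hlim : Tendsto μ atBot (𝓝 0)) :
    (fun s => contactLineForcing n k μ s - 2 / (3 * k ^ 3) * exp ((3 - n) * s)) =o[atBot]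
      fun s => exp ((3 - n) * s) := by
  set φ : ℝ → ℝ := fun s => (1 + μ s) ^ (-(1 / 2) : ℝ) / (exp ((3 - n) * s) + 1)
  have hφ : Tendsto φ atBot (𝓝 1) := by
    have hrpow : Tendsto (fun s => (1 + μ s) ^ (-(1 / 2) : ℝ)) atBot (𝓝 1) := by
      have h1 : Tendsto (fun s => 1 + μ s) atBot (𝓝 1) := by simpa using hlim.const_add 1
      simpa using h1.rpow_const (p := -(1 / 2)) (.inl one_ne_zero)
    have h2 : Tendsto (fun s => exp ((3 - n) * s) + 1) atBot (𝓝 1) := by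
      simpa using (tendsto_exp_mul_atBot (sub_pos.2 hn)).add_const 1
    rw [← div_one (1 : ℝ)]
    exact hrpow.div h2 one_ne_zero
  have hsmall : (fun s => 2 / (3 * k ^ 3) * (φ s - 1)) =o[atBot] fun _ => (1 : ℝ) :=
    (isLittleO_one_iff ℝ).2 (by simpa using (hφ.sub_const 1).const_mul (2 / (3 * k ^ 3)))
  refine (hsmall.mul_isBigO (isBigO_refl (fun s => exp ((3 - n) * s)) atBot)).congr
    (fun s => ?_) fun _ => one_mul _
  have hE := exp_pos ((3 - n) * s)
  simp only [contactLineForcing, φ, neg_mul, exp_neg, ← div_div]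
  generalize 2 / (3 * k ^ 3) = G
  field_simp

theorem hasDerivAt_deriv_of_contactLine (hreg : ContDiff ℝ 2 μ)
    (hode : ∀ s, deriv (deriv μ) s - deriv μ s + contactLineForcing n k μ s = 0) (s : ℝ) :
    HasDerivAt (deriv μ) (deriv μ s - contactLineForcing n k μ s) s :=
  ((contDiff_succ_iff_deriv.mp hreg).2.2.differentiable one_ne_zero s).hasDerivAt.congr_deriv
    (by linarith [hode s])

theorem contactLine_exp_mul_isBigO_of_lt_two (hμ : ∀ s, HasDerivAt μ (D s) s)
    (hD : ∀ s, HasDerivAt D (D s - contactLineForcing n k μ s) s)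
    (hlim : Tendsto μ atBot (𝓝 0))
    (hn : n < 2) :
    ((fun s => exp (-((3 - n) / 3) * s) * μ s) =O[atBot] fun s => exp (n / 3 * s)) ∧
      ((fun s => exp (-((3 - n) / 3) * s) * D s) =O[atBot] fun s => exp (n / 3 * s)) := by
  have hDO := isBigO_exp_of_one_lt (by linarith) hD
    (isLittleO_contactLineForcing_sub (by linarith) hlim)
  have hμO := hDO.of_hasDerivAt_of_tendsto_zero hμ hasDerivAt_exp
    (.of_forall fun _ => (exp_pos _).le) hlim tendsto_exp_atBot
  have hweight : ∀ {u : ℝ → ℝ}, u =O[atBot] exp →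
      (fun s => exp (-((3 - n) / 3) * s) * u s) =O[atBot] fun s => exp (n / 3 * s) :=
    fun hu => ((isBigO_refl (fun s => exp (-((3 - n) / 3) * s)) atBot).mul hu).congr_right
      fun s => by rw [← exp_add]; congr 1; ring
  exact ⟨hweight hμO, hweight hDO⟩

theorem contactLine_exp_mul_sub_isLittleO_of_eq_two (hμ : ∀ s, HasDerivAt μ (D s) s)
    (hD : ∀ s, HasDerivAt D (D s - contactLineForcing n k μ s) s)
    (hlim : Tendsto μ atBot (𝓝 0))
    (hn : n = 2) :
    ((fun s => exp (-((3 - n) / 3) * s) * μ s - -(2 / (3 * k ^ 3)) * s * exp (2 / 3 * s))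
        =o[atBot] fun s => s * exp (2 / 3 * s)) ∧
      ((fun s => exp (-((3 - n) / 3) * s) * D s - -(2 / (3 * k ^ 3)) * s * exp (2 / 3 * s))
        =o[atBot] fun s => s * exp (2 / 3 * s)) := by
  subst hn
  have hg := isLittleO_contactLineForcing_sub (k := k) (by norm_num : (2 : ℝ) < 3) hlim
  simp only [show (3 : ℝ) - 2 = 1 by norm_num, one_mul] at hg
  have hDo := isLittleO_add_mul_mul_exp hD hg
  have hμo := isLittleO_add_mul_mul_exp_of_hasDerivAt hμ hDo hlim
  have hexp : ∀ s, exp (-((3 - 2) / 3) * s) * exp s = exp (2 / 3 * s) := fun s => by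
    rw [← exp_add]; congr 1; ring
  have hweight : ∀ {u : ℝ → ℝ},
      (fun s => u s + 2 / (3 * k ^ 3) * s * exp s) =o[atBot] (fun s => s * exp s) →
      (fun s => exp (-((3 - 2) / 3) * s) * u s - -(2 / (3 * k ^ 3)) * s * exp (2 / 3 * s))
        =o[atBot] fun s => s * exp (2 / 3 * s) :=
    fun hu => ((isBigO_refl (fun s => exp (-((3 - 2) / 3) * s)) atBot).mul_isLittleO hu).congr
      (fun s => by rw [← hexp]; ring) (fun s => by rw [← hexp]; ring)
  exact ⟨hweight hμo, hweight hDo⟩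

theorem contactLine_exp_mul_sub_isLittleO_of_two_lt (hμ : ∀ s, HasDerivAt μ (D s) s)
    (hD : ∀ s, HasDerivAt D (D s - contactLineForcing n k μ s) s)
    (hlim : Tendsto μ atBot (𝓝 0))
    (hn2 : 2 < n) (hn3 : n < 3) :
    ((fun s => exp (-((3 - n) / 3) * s) * μ s
          - 2 / (3 * (3 - n) * (n - 2) * k ^ 3) * exp (2 * (3 - n) / 3 * s)) =o[atBot]
        fun s => exp (2 * (3 - n) / 3 * s)) ∧
      ((fun s => exp (-((3 - n) / 3) * s) * D s
          - 2 / (3 * (n - 2) * k ^ 3) * exp (2 * (3 - n) / 3 * s)) =o[atBot]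
        fun s => exp (2 * (3 - n) / 3 * s)) := by
  have hDo := isLittleO_sub_mul_exp_of_lt_one (by linarith) hD
    (isLittleO_contactLineForcing_sub hn3 hlim)
  have hμo := isLittleO_sub_div_mul_exp_of_hasDerivAt (by linarith) hμ hDo hlim
  have hexp : ∀ s, exp (-((3 - n) / 3) * s) * exp ((3 - n) * s) = exp (2 * (3 - n) / 3 * s) :=
    fun s => by rw [← exp_add]; congr 1; ring
  have hweight : ∀ {u : ℝ → ℝ} {c : ℝ},
      (fun s => u s - c * exp ((3 - n) * s)) =o[atBot] (fun s => exp ((3 - n) * s)) →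
      (fun s => exp (-((3 - n) / 3) * s) * u s - c * exp (2 * (3 - n) / 3 * s))
        =o[atBot] fun s => exp (2 * (3 - n) / 3 * s) :=
    fun hu => ((isBigO_refl (fun s => exp (-((3 - n) / 3) * s)) atBot).mul_isLittleO hu).congr
      (fun s => by rw [← hexp]; ring) hexp
  have hcD : 2 / (3 * k ^ 3) / (1 - (3 - n)) = 2 / (3 * (n - 2) * k ^ 3) := by
    rw [div_div]; congr 1; ring
  have hcμ :
      2 / (3 * k ^ 3) / (1 - (3 - n)) / (3 - n) = 2 / (3 * (3 - n) * (n - 2) * k ^ 3) := by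
    rw [div_div, div_div]; congr 1; ring
  rw [hcD] at hDo
  rw [hcμ] at hμo
  exact ⟨hweight hμo, hweight hDo⟩

theorem contactLine_tendsto_exp_mul (hμ : ∀ s, HasDerivAt μ (D s) s)
    (hD : ∀ s, HasDerivAt D (D s - contactLineForcing n k μ s) s)
    (hlim : Tendsto μ atBot (𝓝 0))
    (hn : n ∈ Ioo 0 3) :
    Tendsto (fun s => (exp (-((3 - n) / 3) * s) * μ s, exp (-((3 - n) / 3) * s) * D s)) atBot
      (𝓝 (0, 0)) := by
  obtain ⟨hn0, hn3⟩ := hn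
  suffices Tendsto (fun s => exp (-((3 - n) / 3) * s) * μ s) atBot (𝓝 0) ∧
      Tendsto (fun s => exp (-((3 - n) / 3) * s) * D s) atBot (𝓝 0) from
    this.1.prodMk_nhds this.2
  rcases lt_trichotomy n 2 with hn2 | rfl | hn2
  · obtain ⟨hq, hp⟩ := contactLine_exp_mul_isBigO_of_lt_two hμ hD hlim hn2
    have hw := tendsto_exp_mul_atBot (by positivity : 0 < n / 3)
    exact ⟨hq.trans_tendsto hw, hp.trans_tendsto hw⟩
  · obtain ⟨hq, hp⟩ := contactLine_exp_mul_sub_isLittleO_of_eq_two hμ hD hlim rfl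
    have hr : (fun s => -(2 / (3 * k ^ 3)) * s * exp (2 / 3 * s)) =O[atBot]
        fun s => s * exp (2 / 3 * s) :=
      ((isBigO_refl _ atBot).const_mul_left (-(2 / (3 * k ^ 3)))).congr_left fun s => by ring
    have hw := tendsto_mul_exp_mul_atBot (by norm_num : (0 : ℝ) < 2 / 3)
    exact ⟨hq.tendsto_zero_of_sub hr hw, hp.tendsto_zero_of_sub hr hw⟩
  · obtain ⟨hq, hp⟩ := contactLine_exp_mul_sub_isLittleO_of_two_lt hμ hD hlim hn2 hn3
    have hw := tendsto_exp_mul_atBot (by linarith : 0 < 2 * (3 - n) / 3)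
    exact ⟨hq.tendsto_zero_of_sub ((isBigO_refl _ atBot).const_mul_left _) hw,
      hp.tendsto_zero_of_sub ((isBigO_refl _ atBot).const_mul_left _) hw⟩

end ContactLine

theorem contact_line_dynamical_system_asymptotics_general (n k : ℝ) (hn : n ∈ Set.Ioo (0 : ℝ) 3)
    (μ : ℝ → ℝ) (hreg : ContDiff ℝ 2 μ)
    (hode : ∀ s : ℝ,
      deriv (deriv μ) s - deriv μ s
        + 2 / (3 * k ^ 3 * (1 + Real.exp (-(3 - n) * s))) * (1 + μ s) ^ (-(1 / 2) : ℝ) = 0)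
    (hlim : Tendsto μ atBot (𝓝 0)) :
    ((n < 2 →
      ((fun s => Real.exp (-((3 - n) / 3) * s) * μ s) =O[atBot]
        fun s => Real.exp (n / 3 * s)) ∧
      ((fun s => Real.exp (-((3 - n) / 3) * s) * deriv μ s) =O[atBot]
        fun s => Real.exp (n / 3 * s))) ∧
    (n = 2 →
      ((fun s => Real.exp (-((3 - n) / 3) * s) * μ s
          - -(2 / (3 * k ^ 3)) * s * Real.exp (2 / 3 * s)) =o[atBot]
        fun s => s * Real.exp (2 / 3 * s)) ∧
      ((fun s => Real.exp (-((3 - n) / 3) * s) * deriv μ s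
          - -(2 / (3 * k ^ 3)) * s * Real.exp (2 / 3 * s)) =o[atBot]
        fun s => s * Real.exp (2 / 3 * s))) ∧
    (2 < n →
      ((fun s => Real.exp (-((3 - n) / 3) * s) * μ s
          - 2 / (3 * (3 - n) * (n - 2) * k ^ 3) * Real.exp (2 * (3 - n) / 3 * s)) =o[atBot]
        fun s => Real.exp (2 * (3 - n) / 3 * s)) ∧
      ((fun s => Real.exp (-((3 - n) / 3) * s) * deriv μ s
          - 2 / (3 * (n - 2) * k ^ 3) * Real.exp (2 * (3 - n) / 3 * s)) =o[atBot]
        fun s => Real.exp (2 * (3 - n) / 3 * s)))) ∧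
    Tendsto (fun s => (Real.exp ((3 - n) / 3 * s),
        Real.exp (-((3 - n) / 3) * s) * μ s,
        Real.exp (-((3 - n) / 3) * s) * deriv μ s)) atBot
      (𝓝 ((0, 0, 0) : ℝ × ℝ × ℝ)) := by
  have hμ : ∀ s, HasDerivAt μ (deriv μ s) s := fun s =>
    (hreg.differentiable two_ne_zero s).hasDerivAt
  have hD := hasDerivAt_deriv_of_contactLine (n := n) (k := k) hreg hode
  exact ⟨⟨contactLine_exp_mul_isBigO_of_lt_two hμ hD hlim,
      contactLine_exp_mul_sub_isLittleO_of_eq_two hμ hD hlim,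
      fun hn2 => contactLine_exp_mul_sub_isLittleO_of_two_lt hμ hD hlim hn2 hn.2⟩,
    (tendsto_exp_mul_atBot (by linarith [hn.2])).prodMk_nhds
      (contactLine_tendsto_exp_mul hμ hD hlim hn)⟩

/-- Asymptotics as `s → −∞` of `q(s) = e^{−((3−n)/3)s}·μ(s)` and
`p(s) = e^{−((3−n)/3)s}·μ'(s)` for solutions `μ` of the contact-line ODE
`μ'' − μ' + (2/(3k³(1+e^{−(3−n)s})))·(1+μ)^{−1/2} = 0` with `μ(s) → 0` as `s → −∞`;
in particular `(e^{((3−n)/3)s}, q(s), p(s)) → (0,0,0)` as `s → −∞`. -/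
theorem contact_line_dynamical_system_asymptotics (n k : ℝ) (hn : n ∈ Set.Ioo (0 : ℝ) 3)
    (hk : 0 < k) (μ : ℝ → ℝ) (hreg : ContDiff ℝ 2 μ) (hpos : ∀ s : ℝ, 0 < 1 + μ s)
    (hode : ∀ s : ℝ,
      deriv (deriv μ) s - deriv μ s
        + 2 / (3 * k ^ 3 * (1 + Real.exp (-(3 - n) * s))) * (1 + μ s) ^ (-(1 / 2) : ℝ) = 0)
    (hlim : Tendsto μ atBot (𝓝 0)) :
    ((n < 2 →
      ((fun s => Real.exp (-((3 - n) / 3) * s) * μ s) =O[atBot]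
        fun s => Real.exp (n / 3 * s)) ∧
      ((fun s => Real.exp (-((3 - n) / 3) * s) * deriv μ s) =O[atBot]
        fun s => Real.exp (n / 3 * s))) ∧
    (n = 2 →
      ((fun s => Real.exp (-((3 - n) / 3) * s) * μ s
          - -(2 / (3 * k ^ 3)) * s * Real.exp (2 / 3 * s)) =o[atBot]
        fun s => s * Real.exp (2 / 3 * s)) ∧
      ((fun s => Real.exp (-((3 - n) / 3) * s) * deriv μ s
          - -(2 / (3 * k ^ 3)) * s * Real.exp (2 / 3 * s)) =o[atBot]
        fun s => s * Real.exp (2 / 3 * s))) ∧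
    (2 < n →
      ((fun s => Real.exp (-((3 - n) / 3) * s) * μ s
          - 2 / (3 * (3 - n) * (n - 2) * k ^ 3) * Real.exp (2 * (3 - n) / 3 * s)) =o[atBot]
        fun s => Real.exp (2 * (3 - n) / 3 * s)) ∧
      ((fun s => Real.exp (-((3 - n) / 3) * s) * deriv μ s
          - 2 / (3 * (n - 2) * k ^ 3) * Real.exp (2 * (3 - n) / 3 * s)) =o[atBot]
        fun s => Real.exp (2 * (3 - n) / 3 * s)))) ∧
    Tendsto (fun s => (Real.exp ((3 - n) / 3 * s),
        Real.exp (-((3 - n) / 3) * s) * μ s,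
        Real.exp (-((3 - n) / 3) * s) * deriv μ s)) atBot
      (𝓝 ((0, 0, 0) : ℝ × ℝ × ℝ)) :=
  contact_line_dynamical_system_asymptotics_general n k hn μ hreg hode hlim
end

section
/- Let n ∈ (0,3) and k > 0, and let p⁻(r,q) be a function of two real variables that is real-analytic in a neighborhood of (0,0) and satisfies there the first-order PDE (r∂_r − q∂_q − n/(3−n))p⁻ + (3/(3−n))·p⁻·∂_q p⁻ = −(2/((3−n)k³))·(r²/(1+r³))·(1+rq)^{−1/2}, together with p⁻(0,0) = 0, ∂_r p⁻(0,0) = 0, and ∂_q p⁻(0,0) = 1. Then ∂_r² p⁻(0,0) = −4/(3(3−n)k³). -/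
/-!
On the line `q = 0` the PDE is the ODE `r F' - a F + c F G = g` for the analytic functions
`F = p⁻(·, 0)` and `G = ∂_q p⁻(·, 0)`, with `a = n/(3-n)`, `c = 3/(3-n)`. Differentiating twice at
`0` and using `F(0) = F'(0) = 0`, `G(0) = 1`, the left side becomes `(2 - a + c) F''(0) = 3 F''(0)`,
while `g''(0) = -4/((3-n)k³)`.
-/

open Filter Topology Set

/-- Partial derivative of a function of two real variables in the first variable. -/
noncomputable def pd1 (f : ℝ → ℝ → ℝ) (a b : ℝ) : ℝ := deriv (fun x => f x b) a

/-- Partial derivative of a function of two real variables in the second variable. -/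
noncomputable def pd2 (f : ℝ → ℝ → ℝ) (a b : ℝ) : ℝ := deriv (fun y => f a y) b

section

variable {𝕜 : Type*} [NontriviallyNormedField 𝕜]

theorem AnalyticAt.deriv_snd {E : Type*} [NormedAddCommGroup E] [NormedSpace 𝕜 E]
    [CompleteSpace E] {f : 𝕜 → 𝕜 → E} {a b : 𝕜} (h : AnalyticAt 𝕜 (Function.uncurry f) (a, b)) :
    AnalyticAt 𝕜 (fun x => deriv (f x) b) a := by
  have hslice : Tendsto (fun x : 𝕜 => (x, b)) (𝓝 a) (𝓝 (a, b)) :=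
    (continuous_id.prodMk continuous_const).tendsto a
  have hfderiv : AnalyticAt 𝕜 (fun x => fderiv 𝕜 (Function.uncurry f) (x, b) (0, 1)) a :=
    ((ContinuousLinearMap.apply 𝕜 E ((0 : 𝕜), (1 : 𝕜))).analyticAt _).comp h.fderiv.curry_left
  refine hfderiv.congr ?_
  filter_upwards [hslice.eventually h.eventually_analyticAt] with x hx
  have hline : HasDerivAt (fun y : 𝕜 => (x, y)) ((0 : 𝕜), (1 : 𝕜)) b :=
    (hasDerivAt_const b x).prodMk (hasDerivAt_id b)
  exact ((hx.differentiableAt.hasFDerivAt.comp_hasDerivAt b hline).deriv).symm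

theorem iteratedDeriv_two_fun_mul {f g : 𝕜 → 𝕜} {x : 𝕜} (hf : ContDiffAt 𝕜 2 f x)
    (hg : ContDiffAt 𝕜 2 g x) :
    iteratedDeriv 2 (fun y => f y * g y) x =
      iteratedDeriv 2 f x * g x + 2 * (deriv f x * deriv g x) + f x * iteratedDeriv 2 g x := by
  rw [iteratedDeriv_fun_mul hf hg]
  simp only [Finset.sum_range_succ, Finset.range_one, Finset.sum_singleton, Nat.choose_zero_right,
    Nat.choose_succ_self_right, Nat.choose_self, Nat.cast_one, iteratedDeriv_zero,
    iteratedDeriv_one, tsub_zero, Nat.add_one_sub_one, tsub_self, one_mul]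
  ring

theorem iteratedDeriv_two_id_mul_zero {g : 𝕜 → 𝕜} (hg : ContDiffAt 𝕜 2 g 0) :
    iteratedDeriv 2 (fun y => y * g y) 0 = 2 * deriv g 0 := by
  rw [iteratedDeriv_two_fun_mul (f := fun y => y) contDiffAt_fun_id hg]
  simp [iteratedDeriv_fun_id]

theorem iteratedDeriv_two_sq_mul_zero {g : 𝕜 → 𝕜} (hg : ContDiffAt 𝕜 2 g 0) :
    iteratedDeriv 2 (fun y => y ^ 2 * g y) 0 = 2 * g 0 := by
  rw [iteratedDeriv_two_fun_mul (by fun_prop) hg]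
  simp

theorem mul_iteratedDeriv_two_eq_of_eventuallyEq_ode {F G g : 𝕜 → 𝕜} {a c : 𝕜}
    (hF : ContDiffAt 𝕜 2 F 0) (hF' : ContDiffAt 𝕜 2 (deriv F) 0) (hG : ContDiffAt 𝕜 2 G 0)
    (hF0 : F 0 = 0) (hF'0 : deriv F 0 = 0)
    (h : (fun r => r * deriv F r - a * F r + c * (F r * G r)) =ᶠ[𝓝 0] g) :
    (2 - a + c * G 0) * iteratedDeriv 2 F 0 = iteratedDeriv 2 g 0 := by
  rw [← h.iteratedDeriv_eq, iteratedDeriv_fun_add (by fun_prop) (by fun_prop),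
    iteratedDeriv_fun_sub (by fun_prop) (by fun_prop), iteratedDeriv_const_mul_field,
    iteratedDeriv_const_mul_field, iteratedDeriv_two_id_mul_zero hF',
    iteratedDeriv_two_fun_mul hF hG, hF0, hF'0, ← iteratedDeriv_one, ← iteratedDeriv_succ']
  ring

end

theorem iteratedDeriv_two_sq_div_one_add_cube_zero :
    iteratedDeriv 2 (fun r : ℝ => r ^ 2 / (1 + r ^ 3)) 0 = 2 := by
  have hden : ContDiffAt ℝ 2 (fun r : ℝ => (1 + r ^ 3)⁻¹) 0 :=
    (contDiffAt_const.add (contDiffAt_id.pow 3)).inv (by norm_num)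
  simp only [div_eq_mul_inv, iteratedDeriv_two_sq_mul_zero hden]
  norm_num

theorem unstable_manifold_second_r_derivative_general (n k : ℝ) (hn : n ∈ Set.Ioo (0 : ℝ) 3)
    (p : ℝ → ℝ → ℝ) (U : Set (ℝ × ℝ)) (hU : U ∈ 𝓝 ((0, 0) : ℝ × ℝ))
    (hanal : ∀ x ∈ U, AnalyticAt ℝ (fun y : ℝ × ℝ => p y.1 y.2) x)
    (hpde : ∀ x ∈ U,
      x.1 * pd1 p x.1 x.2 - x.2 * pd2 p x.1 x.2 - n / (3 - n) * p x.1 x.2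
        + 3 / (3 - n) * p x.1 x.2 * pd2 p x.1 x.2
      = -(2 / ((3 - n) * k ^ 3)) * (x.1 ^ 2 / (1 + x.1 ^ 3))
          * (1 + x.1 * x.2) ^ (-(1 / 2) : ℝ))
    (h0 : p 0 0 = 0) (h1r : pd1 p 0 0 = 0) (h1q : pd2 p 0 0 = 1) :
    deriv^[2] (fun r => p r 0) 0 = -4 / (3 * (3 - n) * k ^ 3) := by
  have hp : AnalyticAt ℝ (Function.uncurry p) (0, 0) := hanal _ (mem_of_mem_nhds hU)
  have hF : AnalyticAt ℝ (fun r => p r 0) 0 := hp.curry_left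
  have hG : AnalyticAt ℝ (fun r => pd2 p r 0) 0 := hp.deriv_snd
  have hslice : {r : ℝ | (r, 0) ∈ U} ∈ 𝓝 0 :=
    (continuous_id.prodMk continuous_const).continuousAt.preimage_mem_nhds hU
  have hode : (fun r => r * deriv (fun r => p r 0) r - n / (3 - n) * p r 0
        + 3 / (3 - n) * (p r 0 * pd2 p r 0)) =ᶠ[𝓝 0]
      fun r => -(2 / ((3 - n) * k ^ 3)) * (r ^ 2 / (1 + r ^ 3)) := by
    filter_upwards [hslice] with r hr
    have hpde_r := hpde (r, 0) hr
    simp only [mul_zero, add_zero, Real.one_rpow, mul_one, zero_mul, sub_zero] at hpde_r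
    rw [← hpde_r, pd1, mul_assoc]
  have hcoeff : 2 - n / (3 - n) + 3 / (3 - n) * 1 = (3 : ℝ) := by
    field_simp [(sub_pos.2 hn.2).ne']
    ring
  have hF'' := mul_iteratedDeriv_two_eq_of_eventuallyEq_ode hF.contDiffAt hF.deriv.contDiffAt
    hG.contDiffAt h0 h1r hode
  rw [iteratedDeriv_const_mul_field, iteratedDeriv_two_sq_div_one_add_cube_zero, h1q,
    hcoeff] at hF''
  rw [← iteratedDeriv_eq_iterate, mul_assoc]
  -- lets `ring` treat `(3 - n) * k ^ 3` as an atom instead of expanding its inverse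
  generalize (3 - n) * k ^ 3 = d at hF'' ⊢
  linear_combination hF'' / 3

/-- For the analytic parameterization `p⁻(r,q)` of the unstable manifold, satisfying
`(r∂_r − q∂_q − n/(3−n))p⁻ + (3/(3−n))p⁻∂_q p⁻ = −(2/((3−n)k³))·(r²/(1+r³))·(1+rq)^{−1/2}`
near `(0,0)` with `p⁻(0,0) = 0`, `∂_r p⁻(0,0) = 0`, `∂_q p⁻(0,0) = 1`, one has
`∂_r² p⁻(0,0) = −4/(3(3−n)k³)`. -/
theorem unstable_manifold_second_r_derivative (n k : ℝ) (hn : n ∈ Set.Ioo (0 : ℝ) 3)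
    (hk : 0 < k) (p : ℝ → ℝ → ℝ) (U : Set (ℝ × ℝ)) (hU : U ∈ 𝓝 ((0, 0) : ℝ × ℝ))
    (hanal : ∀ x ∈ U, AnalyticAt ℝ (fun y : ℝ × ℝ => p y.1 y.2) x)
    (hpde : ∀ x ∈ U,
      x.1 * pd1 p x.1 x.2 - x.2 * pd2 p x.1 x.2 - n / (3 - n) * p x.1 x.2
        + 3 / (3 - n) * p x.1 x.2 * pd2 p x.1 x.2
      = -(2 / ((3 - n) * k ^ 3)) * (x.1 ^ 2 / (1 + x.1 ^ 3))
          * (1 + x.1 * x.2) ^ (-(1 / 2) : ℝ))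
    (h0 : p 0 0 = 0) (h1r : pd1 p 0 0 = 0) (h1q : pd2 p 0 0 = 1) :
    deriv^[2] (fun r => p r 0) 0 = -4 / (3 * (3 - n) * k ^ 3) :=
  unstable_manifold_second_r_derivative_general n k hn p U hU hanal hpde h0 h1r h1q
end

section
/- Let n ∈ (0,3) and k > 0, and let p⁻(r,q) be a function of two real variables that is real-analytic in a neighborhood of (0,0) and satisfies there the first-order PDE (r∂_r − q∂_q − n/(3−n))p⁻ + (3/(3−n))·p⁻·∂_q p⁻ = −(2/((3−n)k³))·(r²/(1+r³))·(1+rq)^{−1/2}, together with p⁻(0,0) = 0, ∂_r p⁻(0,0) = 0, and ∂_q p⁻(0,0) = 1. Then for all nonnegative integers j and ℓ with j ≤ ℓ − 2 one has ∂_r^j ∂_q^ℓ p⁻(0,0) = 0. -/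
open Filter Topology Set

/-!
Write `α = n/(3-n)`, `β = 3/(3-n)` and `c j ℓ = ∂_r^j ∂_q^ℓ p(0,0)`. Applying `∂_q^ℓ` at `q = 0`
and then `∂_r^j` at `r = 0` to the PDE (mixed partials of an analytic function commute) gives,
by the Leibniz rule,
`(j - ℓ - α) c j ℓ + β ∑ C(ℓ,b) C(j,a) c a b · c (j-a) (ℓ-b+1) = ∂_r^j ∂_q^ℓ(source)(0,0)`.
After `ℓ` derivatives in `q` at `q = 0` the source is `r^(ℓ+2)` times a function analytic at
`0`, so the right side vanishes for `j ≤ ℓ + 1`. By strong induction on `j + ℓ`, in the region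
`j + 2 ≤ ℓ` every product in the sum contains a vanishing factor (of lower order, or
`p(0,0) = ∂_r p(0,0) = 0`) except `(a,b) = (0,1)` and `(j,ℓ)`, which contribute `(ℓ + 1) c j ℓ`
since `∂_q p(0,0) = 1`. What is left is `(j - ℓ - α + β (ℓ + 1)) c j ℓ = 0`, and for
`n ∈ (0,3)` that coefficient is `(3j + n(ℓ-j-1) + 3)/(3-n) > 0`.
-/

open Function

section OneVariable

variable {𝕜 : Type*} [NontriviallyNormedField 𝕜]

theorem iteratedDeriv_comp_mul_left {E : Type*} [NormedAddCommGroup E] [NormedSpace 𝕜 E]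
    (n : ℕ) (f : 𝕜 → E) (c : 𝕜) :
    iteratedDeriv n (fun x => f (c * x)) = fun x => c ^ n • iteratedDeriv n f (c * x) := by
  induction n with
  | zero => simp
  | succ n ih =>
    funext x
    rw [iteratedDeriv_succ, ih, deriv_fun_const_smul_field, deriv_comp_mul_left, smul_smul,
      pow_succ, iteratedDeriv_succ]

theorem iteratedDeriv_fun_id_mul_deriv_zero {f : 𝕜 → 𝕜} {n : ℕ}
    (hf : ContDiffAt 𝕜 n (deriv f) 0) :
    iteratedDeriv n (fun y => y * deriv f y) 0 = n * iteratedDeriv n f 0 := by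
  rcases n with _ | n
  · simp
  rw [iteratedDeriv_fun_mul (f := fun y => y) contDiffAt_id hf, Finset.sum_eq_single 1]
  · simp [iteratedDeriv_succ']
  · intro i _ hi
    simp [iteratedDeriv_fun_id_zero, hi]
  · simp

theorem iteratedDeriv_fun_pow_mul_zero {f : 𝕜 → 𝕜} {j m : ℕ} (hf : ContDiffAt 𝕜 j f 0)
    (hjm : j < m) : iteratedDeriv j (fun x => x ^ m * f x) 0 = 0 := by
  rw [iteratedDeriv_fun_mul (f := fun x => x ^ m) (contDiffAt_id.pow m) hf]
  refine Finset.sum_eq_zero fun i hi => ?_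
  have : m - i ≠ 0 := by grind
  simp [this]

end OneVariable

theorem iteratedDeriv_one_add_mul_rpow_zero (ℓ : ℕ) (r e : ℝ) :
    iteratedDeriv ℓ (fun q => (1 + r * q) ^ e) 0 = (descPochhammer ℝ ℓ).eval e * r ^ ℓ := by
  rw [iteratedDeriv_comp_mul_left ℓ (fun y : ℝ => (1 + y) ^ e) r,
    iteratedDeriv_comp_const_add ℓ (fun x : ℝ => x ^ e) 1, iteratedDeriv_eq_iterate]
  simp [Real.iter_deriv_rpow_const, mul_comm]

section Slices

variable {E : Type*} [NormedAddCommGroup E] [NormedSpace ℝ E] {Φ : ℝ × ℝ → E}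
  {Φ' : ℝ × ℝ →L[ℝ] E} {a b : ℝ}

theorem HasFDerivAt.hasDerivAt_slice_fst (h : HasFDerivAt Φ Φ' (a, b)) :
    HasDerivAt (fun t => Φ (t, b)) (Φ' (1, 0)) a := by
  simpa [comp_def] using h.comp_hasDerivAt a ((hasDerivAt_id a).prodMk (hasDerivAt_const a b))

theorem HasFDerivAt.hasDerivAt_slice_snd (h : HasFDerivAt Φ Φ' (a, b)) :
    HasDerivAt (fun t => Φ (a, t)) (Φ' (0, 1)) b := by
  simpa [comp_def] using h.comp_hasDerivAt b ((hasDerivAt_const b a).prodMk (hasDerivAt_id b))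

end Slices

section Partials

variable {f : ℝ → ℝ → ℝ} {a b : ℝ}

theorem pd1_eq_fderiv (h : DifferentiableAt ℝ (uncurry f) (a, b)) :
    pd1 f a b = fderiv ℝ (uncurry f) (a, b) (1, 0) :=
  h.hasFDerivAt.hasDerivAt_slice_fst.deriv

theorem pd2_eq_fderiv (h : DifferentiableAt ℝ (uncurry f) (a, b)) :
    pd2 f a b = fderiv ℝ (uncurry f) (a, b) (0, 1) :=
  h.hasFDerivAt.hasDerivAt_slice_snd.deriv

theorem AnalyticAt.uncurry_pd1 {x : ℝ × ℝ} (h : AnalyticAt ℝ (uncurry f) x) :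
    AnalyticAt ℝ (uncurry (pd1 f)) x := by
  refine (((ContinuousLinearMap.apply ℝ ℝ ((1 : ℝ), (0 : ℝ))).analyticAt _).comp
    h.fderiv).congr ?_
  filter_upwards [h.eventually_analyticAt] with y hy
  exact (pd1_eq_fderiv hy.differentiableAt).symm

theorem AnalyticAt.uncurry_pd2 {x : ℝ × ℝ} (h : AnalyticAt ℝ (uncurry f) x) :
    AnalyticAt ℝ (uncurry (pd2 f)) x := by
  refine (((ContinuousLinearMap.apply ℝ ℝ ((0 : ℝ), (1 : ℝ))).analyticAt _).comp
    h.fderiv).congr ?_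
  filter_upwards [h.eventually_analyticAt] with y hy
  exact (pd2_eq_fderiv hy.differentiableAt).symm

theorem AnalyticAt.analyticAt_slice_fst (h : AnalyticAt ℝ (uncurry f) (a, b)) :
    AnalyticAt ℝ (fun t => f t b) a :=
  h.comp (f := fun t => (t, b)) (analyticAt_id.prod analyticAt_const)

theorem AnalyticAt.analyticAt_slice_snd (h : AnalyticAt ℝ (uncurry f) (a, b)) :
    AnalyticAt ℝ (f a) b :=
  h.comp (f := fun t => (a, t)) (analyticAt_const.prod analyticAt_id)

theorem AnalyticAt.pd1_pd2_comm (h : AnalyticAt ℝ (uncurry f) (a, b)) :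
    pd1 (pd2 f) a b = pd2 (pd1 f) a b := by
  have hF : ∀ᶠ y in 𝓝 (a, b), HasFDerivAt (uncurry f) (fderiv ℝ (uncurry f) y) y :=
    h.eventually_analyticAt.mono fun y hy => hy.differentiableAt.hasFDerivAt
  have hF' := h.fderiv.differentiableAt.hasFDerivAt
  have hpd2 : (fun t => pd2 f t b) =ᶠ[𝓝 a] fun t => fderiv ℝ (uncurry f) (t, b) (0, 1) :=
    hF.curry_nhds.mono fun t ht => ht.self_of_nhds.hasDerivAt_slice_snd.deriv
  have hpd1 : pd1 f a =ᶠ[𝓝 b] fun t => fderiv ℝ (uncurry f) (a, t) (1, 0) :=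
    hF.curry_nhds.self_of_nhds.mono fun t ht => ht.hasDerivAt_slice_fst.deriv
  have h12 := hF'.hasDerivAt_slice_fst.clm_apply (hasDerivAt_const a ((0 : ℝ), (1 : ℝ)))
  have h21 := hF'.hasDerivAt_slice_snd.clm_apply (hasDerivAt_const b ((1 : ℝ), (0 : ℝ)))
  simp only [map_zero, add_zero] at h12 h21
  rw [pd1, pd2, hpd2.deriv_eq, hpd1.deriv_eq, h12.deriv, h21.deriv,
    second_derivative_symmetric_of_eventually hF hF']

theorem AnalyticAt.uncurry_iteratedDeriv_snd {x : ℝ × ℝ} (h : AnalyticAt ℝ (uncurry f) x)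
    (m : ℕ) : AnalyticAt ℝ (uncurry fun r => iteratedDeriv m (f r)) x := by
  induction m generalizing f with
  | zero => exact h
  | succ m ih =>
    simp only [iteratedDeriv_succ']
    exact ih h.uncurry_pd2

theorem AnalyticAt.iteratedDeriv_pd1 (h : AnalyticAt ℝ (uncurry f) (a, b)) (m : ℕ) :
    iteratedDeriv m (pd1 f a) b = deriv (fun t => iteratedDeriv m (f t) b) a := by
  induction m generalizing f with
  | zero => rfl
  | succ m ih =>
    have hcomm : pd2 (pd1 f) a =ᶠ[𝓝 b] pd1 (pd2 f) a :=
      h.eventually_analyticAt.curry_nhds.self_of_nhds.mono fun t ht => ht.pd1_pd2_comm.symm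
    simp only [iteratedDeriv_succ']
    exact (hcomm.iteratedDeriv_eq m).trans (ih h.uncurry_pd2)

end Partials

/-- With `c a b` standing for `∂_r^a ∂_q^b p(0,0)`, this is `∂_r^j ∂_q^ℓ (p · ∂_q p)(0,0)`. -/
noncomputable def leibnizMulDq (c : ℕ → ℕ → ℝ) (j ℓ : ℕ) : ℝ :=
  ∑ b ∈ Finset.range (ℓ + 1), (ℓ.choose b : ℝ) *
    ∑ a ∈ Finset.range (j + 1), (j.choose a : ℝ) * c a b * c (j - a) (ℓ - b + 1)

section Recursion

variable {c : ℕ → ℕ → ℝ}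

theorem leibnizMulDq_eq_succ_mul (h00 : c 0 0 = 0) (h10 : c 1 0 = 0) (h01 : c 0 1 = 1) {j ℓ : ℕ}
    (hjℓ : j + 2 ≤ ℓ) (hlower : ∀ a b, a + b < j + ℓ → a + 2 ≤ b → c a b = 0) :
    leibnizMulDq c j ℓ = (ℓ + 1) * c j ℓ := by
  have hvanish : ∀ a ≤ j, ∀ b ≤ ℓ, (a, b) ≠ (0, 1) → (a, b) ≠ (j, ℓ) →
      c a b * c (j - a) (ℓ - b + 1) = 0 := by
    intro a ha b hb h01' hjℓ'
    simp only [ne_eq, Prod.mk.injEq, not_and] at h01' hjℓ'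
    by_cases hbase : b = 0 ∧ a ≤ 1
    · obtain ⟨rfl, ha1⟩ := hbase
      interval_cases a <;> simp [h00, h10]
    by_cases hab : a + 2 ≤ b
    · rw [hlower a b (by omega) hab, zero_mul]
    · rw [hlower (j - a) (ℓ - b + 1) (by omega) (by omega), mul_zero]
  have hrow1 :
      ∑ a ∈ Finset.range (j + 1), (j.choose a : ℝ) * c a 1 * c (j - a) (ℓ - 1 + 1) = c j ℓ := by
    rw [Finset.sum_eq_single 0]
    · simp [h01, show ℓ - 1 + 1 = ℓ by omega]
    · intro a ha ha0
      rw [mul_assoc, hvanish a (by simp at ha; omega) 1 (by omega) (by simp [ha0])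
        (by simp; omega), mul_zero]
    · simp
  have hrowℓ :
      ∑ a ∈ Finset.range (j + 1), (j.choose a : ℝ) * c a ℓ * c (j - a) (ℓ - ℓ + 1) = c j ℓ := by
    rw [Finset.sum_eq_single j]
    · simp [h01]
    · intro a ha haj
      rw [mul_assoc, hvanish a (by simp at ha; omega) ℓ le_rfl (by simp; omega) (by simp [haj]),
        mul_zero]
    · simp
  unfold leibnizMulDq
  rw [Finset.sum_eq_add_of_mem 1 ℓ (by simp; omega) (by simp) (by omega), hrow1, hrowℓ]
  · simp only [Nat.choose_one_right, Nat.choose_self]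
    push_cast
    ring
  · intro b hb ⟨hb1, hbℓ⟩
    refine mul_eq_zero_of_right _ (Finset.sum_eq_zero fun a ha => ?_)
    rw [mul_assoc, hvanish a (by simp at ha; omega) b (by simp at hb; omega) (by simp [hb1])
      (by simp [hbℓ]), mul_zero]

theorem eq_zero_of_leibnizMulDq_recursion {α β : ℝ} (h00 : c 0 0 = 0) (h10 : c 1 0 = 0)
    (h01 : c 0 1 = 1) (hcoef : ∀ j ℓ : ℕ, j + 2 ≤ ℓ → (j : ℝ) - ℓ - α + β * (ℓ + 1) ≠ 0)
    (hrec : ∀ j ℓ : ℕ, j + 2 ≤ ℓ → ((j : ℝ) - ℓ - α) * c j ℓ + β * leibnizMulDq c j ℓ = 0) :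
    ∀ j ℓ : ℕ, j + 2 ≤ ℓ → c j ℓ = 0 := by
  suffices h : ∀ N j ℓ, j + ℓ = N → j + 2 ≤ ℓ → c j ℓ = 0 from fun j ℓ => h _ j ℓ rfl
  intro N
  induction N using Nat.strong_induction_on with
  | _ N ih =>
    rintro j ℓ rfl hjℓ
    have hlower : ∀ a b, a + b < j + ℓ → a + 2 ≤ b → c a b = 0 :=
      fun a b hab => ih (a + b) hab a b rfl
    have h := hrec j ℓ hjℓ
    rw [leibnizMulDq_eq_succ_mul h00 h10 h01 hjℓ hlower] at h
    have : ((j : ℝ) - ℓ - α + β * (ℓ + 1)) * c j ℓ = 0 := by linear_combination h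
    exact (mul_eq_zero.mp this).resolve_left (hcoef j ℓ hjℓ)

end Recursion

noncomputable def mixedDeriv (f : ℝ → ℝ → ℝ) (j ℓ : ℕ) : ℝ :=
  iteratedDeriv j (fun r => iteratedDeriv ℓ (f r) 0) 0

section PDE

variable {p : ℝ → ℝ → ℝ} {α β : ℝ}

theorem AnalyticAt.iteratedDeriv_pde_lhs {r : ℝ} (h : AnalyticAt ℝ (uncurry p) (r, 0)) (ℓ : ℕ) :
    iteratedDeriv ℓ (fun q => r * pd1 p r q - q * pd2 p r q - α * p r q
        + β * p r q * pd2 p r q) 0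
      = r * deriv (fun t => iteratedDeriv ℓ (p t) 0) r - (ℓ + α) * iteratedDeriv ℓ (p r) 0
        + β * ∑ b ∈ Finset.range (ℓ + 1),
            (ℓ.choose b : ℝ) * iteratedDeriv b (p r) 0 * iteratedDeriv (ℓ - b + 1) (p r) 0 := by
  have hp : ContDiffAt ℝ ℓ (p r) 0 := h.analyticAt_slice_snd.contDiffAt
  have hp1 : ContDiffAt ℝ ℓ (pd1 p r) 0 := h.uncurry_pd1.analyticAt_slice_snd.contDiffAt
  have hp2 : ContDiffAt ℝ ℓ (deriv (p r)) 0 := h.uncurry_pd2.analyticAt_slice_snd.contDiffAt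
  have hsplit : (fun q => r * pd1 p r q - q * pd2 p r q - α * p r q + β * p r q * pd2 p r q)
      = fun q => r * pd1 p r q - q * deriv (p r) q - α * p r q
        + β * (p r q * deriv (p r) q) := by
    funext q; simp only [pd2, mul_assoc]
  rw [hsplit, iteratedDeriv_fun_add (by fun_prop) (by fun_prop),
    iteratedDeriv_fun_sub (by fun_prop) (by fun_prop),
    iteratedDeriv_fun_sub (by fun_prop) (by fun_prop),
    iteratedDeriv_const_mul_field, iteratedDeriv_const_mul_field, iteratedDeriv_const_mul_field,
    iteratedDeriv_fun_id_mul_deriv_zero hp2,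
    iteratedDeriv_fun_mul hp hp2, h.iteratedDeriv_pd1]
  simp only [← iteratedDeriv_succ']
  ring

theorem mixedDeriv_identity_of_pde {G : ℝ → ℝ → ℝ}
    (hanal : ∀ᶠ x in 𝓝 ((0 : ℝ), (0 : ℝ)), AnalyticAt ℝ (uncurry p) x)
    (hpde : ∀ᶠ x in 𝓝 ((0 : ℝ), (0 : ℝ)), x.1 * pd1 p x.1 x.2 - x.2 * pd2 p x.1 x.2
      - α * p x.1 x.2 + β * p x.1 x.2 * pd2 p x.1 x.2 = G x.1 x.2) (j ℓ : ℕ) :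
    ((j : ℝ) - ℓ - α) * mixedDeriv p j ℓ + β * leibnizMulDq (mixedDeriv p) j ℓ
      = mixedDeriv G j ℓ := by
  set P : ℕ → ℝ → ℝ := fun m r => iteratedDeriv m (p r) 0
  have hP : ∀ m, ContDiffAt ℝ j (P m) 0 := fun m =>
    (hanal.self_of_nhds.uncurry_iteratedDeriv_snd m).analyticAt_slice_fst.contDiffAt
  have hP' : ContDiffAt ℝ j (deriv (P ℓ)) 0 :=
    (hanal.self_of_nhds.uncurry_iteratedDeriv_snd ℓ).analyticAt_slice_fst.deriv.contDiffAt
  have hslice : (fun r => iteratedDeriv ℓ (G r) 0) =ᶠ[𝓝 0] fun r => r * deriv (P ℓ) r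
      - (ℓ + α) * P ℓ r
      + β * ∑ b ∈ Finset.range (ℓ + 1), (ℓ.choose b : ℝ) * P b r * P (ℓ - b + 1) r := by
    filter_upwards [(hanal.and hpde).curry_nhds] with r hr
    rw [← hr.self_of_nhds.1.iteratedDeriv_pde_lhs]
    exact Filter.EventuallyEq.iteratedDeriv_eq ℓ (hr.mono fun q hq => hq.2.symm)
  have hterm : ∀ b, iteratedDeriv j (fun r => (ℓ.choose b : ℝ) * P b r * P (ℓ - b + 1) r) 0
      = (ℓ.choose b : ℝ) * ∑ a ∈ Finset.range (j + 1),
          (j.choose a : ℝ) * mixedDeriv p a b * mixedDeriv p (j - a) (ℓ - b + 1) := by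
    intro b
    simp only [mul_assoc, iteratedDeriv_const_mul_field]
    rw [iteratedDeriv_fun_mul (hP b) (hP _)]
    simp only [mixedDeriv, P, mul_assoc]
  rw [show mixedDeriv G j ℓ = _ from hslice.iteratedDeriv_eq j,
    iteratedDeriv_fun_add (by fun_prop) (by fun_prop),
    iteratedDeriv_fun_sub (by fun_prop) (by fun_prop), iteratedDeriv_fun_id_mul_deriv_zero hP',
    iteratedDeriv_const_mul_field, iteratedDeriv_const_mul_field,
    iteratedDeriv_fun_sum fun b _ => by fun_prop]
  rw [show iteratedDeriv j (P ℓ) 0 = mixedDeriv p j ℓ from rfl]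
  simp only [hterm, leibnizMulDq]
  ring

end PDE

theorem mixedDeriv_rpow_source_eq_zero (K e : ℝ) {j ℓ : ℕ} (h : j < ℓ + 2) :
    mixedDeriv (fun r q => K * (r ^ 2 / (1 + r ^ 3)) * (1 + r * q) ^ e) j ℓ = 0 := by
  have hfactor :
      (fun r : ℝ => iteratedDeriv ℓ (fun q => K * (r ^ 2 / (1 + r ^ 3)) * (1 + r * q) ^ e) 0)
        = fun r => r ^ (ℓ + 2) * (K * (descPochhammer ℝ ℓ).eval e / (1 + r ^ 3)) := by
    funext r
    rw [iteratedDeriv_const_mul_field, iteratedDeriv_one_add_mul_rpow_zero]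
    ring
  rw [mixedDeriv, hfactor]
  exact iteratedDeriv_fun_pow_mul_zero (contDiffAt_const.div (by fun_prop) (by norm_num)) h

theorem recursion_coeff_ne_zero {n : ℝ} (hn : n ∈ Ioo 0 3) {j ℓ : ℕ} (h : j + 2 ≤ ℓ) :
    (j : ℝ) - ℓ - n / (3 - n) + 3 / (3 - n) * (ℓ + 1) ≠ 0 := by
  obtain ⟨hn0, hn3⟩ := hn
  have h3n : 3 - n ≠ 0 := by linarith
  have hjℓ : (j : ℝ) + 2 ≤ ℓ := by exact_mod_cast h
  have hpos : 0 < 3 * (j : ℝ) + n * (ℓ - j - 1) + 3 := by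
    nlinarith [(j.cast_nonneg : (0 : ℝ) ≤ j)]
  have : (j : ℝ) - ℓ - n / (3 - n) + 3 / (3 - n) * (ℓ + 1)
      = (3 * (j : ℝ) + n * (ℓ - j - 1) + 3) / (3 - n) := by
    field_simp
    ring
  rw [this]
  exact div_ne_zero hpos.ne' h3n

theorem unstable_manifold_vanishing_mixed_derivatives_general (n k : ℝ)
    (hn : n ∈ Set.Ioo (0 : ℝ) 3)
    (p : ℝ → ℝ → ℝ) (U : Set (ℝ × ℝ)) (hU : U ∈ 𝓝 ((0, 0) : ℝ × ℝ))
    (hanal : ∀ x ∈ U, AnalyticAt ℝ (fun y : ℝ × ℝ => p y.1 y.2) x)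
    (hpde : ∀ x ∈ U,
      x.1 * pd1 p x.1 x.2 - x.2 * pd2 p x.1 x.2 - n / (3 - n) * p x.1 x.2
        + 3 / (3 - n) * p x.1 x.2 * pd2 p x.1 x.2
      = -(2 / ((3 - n) * k ^ 3)) * (x.1 ^ 2 / (1 + x.1 ^ 3))
          * (1 + x.1 * x.2) ^ (-(1 / 2) : ℝ))
    (h0 : p 0 0 = 0) (h1r : pd1 p 0 0 = 0) (h1q : pd2 p 0 0 = 1) :
    ∀ j ℓ : ℕ, j + 2 ≤ ℓ →
      deriv^[j] (fun r => deriv^[ℓ] (fun q => p r q) 0) 0 = 0 := by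
  intro j ℓ hjℓ
  simp only [← iteratedDeriv_eq_iterate]
  refine eq_zero_of_leibnizMulDq_recursion (c := mixedDeriv p) ?_ ?_ ?_
    (fun j ℓ h => recursion_coeff_ne_zero hn h) (fun j ℓ h => ?_) j ℓ hjℓ
  · simpa only [mixedDeriv, iteratedDeriv_zero] using h0
  · simp only [mixedDeriv, iteratedDeriv_zero, iteratedDeriv_one]
    exact h1r
  · simp only [mixedDeriv, iteratedDeriv_zero, iteratedDeriv_one]
    exact h1q
  · rw [mixedDeriv_identity_of_pde (eventually_of_mem hU hanal) (eventually_of_mem hU hpde)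
      (G := fun r q =>
        -(2 / ((3 - n) * k ^ 3)) * (r ^ 2 / (1 + r ^ 3)) * (1 + r * q) ^ (-(1 / 2) : ℝ)),
      mixedDeriv_rpow_source_eq_zero _ _ (by omega)]

/-- For the analytic parameterization `p⁻(r,q)` of the unstable manifold, satisfying
`(r∂_r − q∂_q − n/(3−n))p⁻ + (3/(3−n))p⁻∂_q p⁻ = −(2/((3−n)k³))·(r²/(1+r³))·(1+rq)^{−1/2}`
near `(0,0)` with `p⁻(0,0) = 0`, `∂_r p⁻(0,0) = 0`, `∂_q p⁻(0,0) = 1`, all mixed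
partial derivatives `∂_r^j ∂_q^ℓ p⁻(0,0)` with `j ≤ ℓ − 2` vanish. -/
theorem unstable_manifold_vanishing_mixed_derivatives (n k : ℝ)
    (hn : n ∈ Set.Ioo (0 : ℝ) 3) (hk : 0 < k)
    (p : ℝ → ℝ → ℝ) (U : Set (ℝ × ℝ)) (hU : U ∈ 𝓝 ((0, 0) : ℝ × ℝ))
    (hanal : ∀ x ∈ U, AnalyticAt ℝ (fun y : ℝ × ℝ => p y.1 y.2) x)
    (hpde : ∀ x ∈ U,
      x.1 * pd1 p x.1 x.2 - x.2 * pd2 p x.1 x.2 - n / (3 - n) * p x.1 x.2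
        + 3 / (3 - n) * p x.1 x.2 * pd2 p x.1 x.2
      = -(2 / ((3 - n) * k ^ 3)) * (x.1 ^ 2 / (1 + x.1 ^ 3))
          * (1 + x.1 * x.2) ^ (-(1 / 2) : ℝ))
    (h0 : p 0 0 = 0) (h1r : pd1 p 0 0 = 0) (h1q : pd2 p 0 0 = 1) :
    ∀ j ℓ : ℕ, j + 2 ≤ ℓ →
      deriv^[j] (fun r => deriv^[ℓ] (fun q => p r q) 0) 0 = 0 :=
  unstable_manifold_vanishing_mixed_derivatives_general n k hn p U hU hanal hpde h0 h1r h1q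
end

section
/- Let n ∈ (0,3), k > 0, and let g(ϱ,μ) be real-analytic in a neighborhood of (0,0) with g(0,0) = 0, ∂_ϱ g(0,0) = 0, and ∂_μ g(0,0) = 0. Suppose μ : (0,ε) → ℝ is continuously differentiable, (H^{3−n}, μ(H)) lies in the domain of analyticity of g for 0 < H < ε, μ satisfies H·μ'(H) − μ(H) = g(H^{3−n}, μ(H)) − (2/(3k³(3−n)))·H^{3−n} on (0,ε), and H^{−δ}·μ(H) → 0 as H ↓ 0 for some δ > 0. Then, as H ↓ 0: μ(H) = O(H) if 0 < n < 2, μ(H) = O(−H·ln H) if n = 2, and μ(H) = O(H^{3−n}) if 2 < n < 3. -/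
open Filter Topology Set Asymptotics

/-!
Put `m = 3 - n`. The equation says `(μ/H)' = R/H²` with `R(H) = g(H^m, μ(H)) - c·H^m`.
Since `g` vanishes to second order at the origin, `μ = O(H^γ)` gives `R = O(H^α)` for every
`α ≤ min(2γ, m)`, and integrating `|(μ/H)'| ≤ B·H^(α-2)` down from a fixed `H₀` turns this
into `μ = O(H^α)`, `O(-H log H)` or `O(H)` according as `α < 1`, `α = 1` or `α > 1`.
Starting from `μ = O(H^δ)` and doubling the exponent while it stays below `min(1, m)`, finitely
many steps give some `α = m < 1`, `α = 1` or `α > 1` in the three cases.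
-/

theorem abs_sub_le_sub_of_abs_deriv_le {φ φ' F F' : ℝ → ℝ} {a b : ℝ} (hab : a ≤ b)
    (hφ : ∀ x ∈ Icc a b, HasDerivAt φ (φ' x) x) (hF : ∀ x ∈ Icc a b, HasDerivAt F (F' x) x)
    (hle : ∀ x ∈ Icc a b, |φ' x| ≤ F' x) : |φ b - φ a| ≤ F b - F a := by
  have key : ∀ s : ℝ, |s| ≤ 1 → s * (φ b - φ a) ≤ F b - F a := by
    intro s hs
    have hd : ∀ x ∈ Icc a b, HasDerivAt (fun x => F x - s * φ x) (F' x - s * φ' x) x :=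
      fun x hx => (hF x hx).sub ((hφ x hx).const_mul s)
    have hmono := monotoneOn_of_hasDerivWithinAt_nonneg (convex_Icc a b)
      (fun x hx => (hd x hx).continuousAt.continuousWithinAt)
      (fun x hx => (hd x (interior_subset hx)).hasDerivWithinAt)
      (fun x hx => by
        have hx := interior_subset hx
        have : s * φ' x ≤ |φ' x| := by
          calc s * φ' x ≤ |s * φ' x| := le_abs_self _
            _ = |s| * |φ' x| := abs_mul s (φ' x)
            _ ≤ |φ' x| := mul_le_of_le_one_left (abs_nonneg _) hs
        linarith [hle x hx])
    have := hmono (left_mem_Icc.2 hab) (right_mem_Icc.2 hab) hab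
    simp only at this
    linarith
  have h₁ := key 1 (by norm_num)
  have h₂ := key (-1) (by norm_num)
  exact abs_le.2 ⟨by linarith, by linarith⟩

theorem exists_abs_le_sub_of_abs_deriv_le {φ φ' F F' : ℝ → ℝ} {ε : ℝ} (hε : 0 < ε)
    (hφ : ∀ x ∈ Ioo 0 ε, HasDerivAt φ (φ' x) x) (hF : ∀ x ∈ Ioo 0 ε, HasDerivAt F (F' x) x)
    (hle : ∀ᶠ x in 𝓝[>] 0, |φ' x| ≤ F' x) :
    ∃ C, ∀ᶠ x in 𝓝[>] (0 : ℝ), |φ x| ≤ C - F x := by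
  obtain ⟨u, hu, hsub⟩ :=
    mem_nhdsGT_iff_exists_Ioc_subset.1 (hle.and (Ioo_mem_nhdsGT hε))
  refine ⟨|φ u| + F u, ?_⟩
  filter_upwards [Ioc_mem_nhdsGT hu] with x hx
  have hIcc : Icc x u ⊆ {x | |φ' x| ≤ F' x ∧ x ∈ Ioo 0 ε} :=
    fun y hy => hsub ⟨hx.1.trans_le hy.1, hy.2⟩
  have := abs_sub_le_sub_of_abs_deriv_le hx.2 (fun y hy => hφ y (hIcc hy).2)
    (fun y hy => hF y (hIcc hy).2) fun y hy => (hIcc hy).1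
  linarith [abs_sub_abs_le_abs_sub (φ x) (φ u), abs_sub_comm (φ x) (φ u)]

theorem isBigO_rpow_rpow_nhdsGT_zero {a b : ℝ} (h : b ≤ a) :
    (fun x : ℝ => x ^ a) =O[𝓝[>] 0] fun x => x ^ b := by
  refine IsBigO.of_bound 1 ?_
  filter_upwards [Ioo_mem_nhdsGT one_pos] with x hx
  rw [Real.norm_of_nonneg (Real.rpow_nonneg hx.1.le _),
    Real.norm_of_nonneg (Real.rpow_nonneg hx.1.le _), one_mul]
  exact Real.rpow_le_rpow_of_exponent_ge hx.1 hx.2.le h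

theorem tendsto_rpow_nhdsGT_zero {a : ℝ} (ha : 0 < a) :
    Tendsto (fun x : ℝ => x ^ a) (𝓝[>] 0) (𝓝 0) := by
  simpa [Real.zero_rpow ha.ne'] using
    (Real.continuousAt_rpow_const 0 a (Or.inr ha.le)).tendsto.mono_left nhdsWithin_le_nhds

theorem Antitone.of_doubling {P : ℝ → Prop} (hP : Antitone P) {γ₀ β : ℝ} (hγ₀ : 0 < γ₀)
    (h₀ : P γ₀) (hstep : ∀ γ, 0 < γ → 2 * γ ≤ β → P γ → P (2 * γ)) : P β := by
  obtain ⟨N, hN⟩ := pow_unbounded_of_one_lt (β / γ₀) one_lt_two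
  replace hN : β ≤ 2 ^ N * γ₀ := ((div_lt_iff₀ hγ₀).1 hN).le
  induction N generalizing γ₀ with
  | zero => exact hP (by linarith [pow_zero (2 : ℝ)]) h₀
  | succ N ih =>
    rcases le_or_gt β γ₀ with hβ | hβ
    · exact hP hβ h₀
    have hγ : 0 < min γ₀ (β / 2) := lt_min hγ₀ (by linarith)
    refine ih (by positivity) (hstep _ hγ (by linarith [min_le_right γ₀ (β / 2)])
      (hP (min_le_left _ _) h₀)) ?_
    rcases min_cases γ₀ (β / 2) with ⟨hmin, -⟩ | ⟨hmin, -⟩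
    · rwa [hmin, ← mul_assoc, ← pow_succ]
    · rw [hmin]; nlinarith [one_le_pow₀ (M₀ := ℝ) (a := 2) (n := N) one_le_two]

theorem AnalyticAt.isBigO_norm_sq {𝕜 E F : Type*} [NontriviallyNormedField 𝕜]
    [NormedAddCommGroup E] [NormedSpace 𝕜 E] [NormedAddCommGroup F] [NormedSpace 𝕜 F]
    {f : E → F} (hf : AnalyticAt 𝕜 f 0) (h₀ : f 0 = 0) (h₁ : fderiv 𝕜 f 0 = 0) :
    f =O[𝓝 0] fun x => ‖x‖ ^ 2 := by
  obtain ⟨p, hp⟩ := hf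
  have hp₁ : ∀ y, p 1 (fun _ => y) = 0 := fun y => by
    simpa [hp.fderiv_eq, Matrix.vec_single_eq_const] using congrArg (fun L : E →L[𝕜] F => L y) h₁
  simpa [FormalMultilinearSeries.partialSum, Finset.sum_range_succ, hp.coeff_zero, h₀, hp₁]
    using hp.isBigO_sub_partialSum_pow 2

theorem fderiv_uncurry_eq_zero {f : ℝ → ℝ → ℝ} {a b : ℝ}
    (hf : DifferentiableAt ℝ (fun q : ℝ × ℝ => f q.1 q.2) (a, b))
    (h₁ : pd1 f a b = 0) (h₂ : pd2 f a b = 0) :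
    fderiv ℝ (fun q : ℝ × ℝ => f q.1 q.2) (a, b) = 0 := by
  set L := fderiv ℝ (fun q : ℝ × ℝ => f q.1 q.2) (a, b)
  have hL₁ : HasDerivAt (fun x => f x b) (L (1, 0)) a :=
    hf.hasFDerivAt.comp_hasDerivAt_of_eq a
      ((hasDerivAt_id a).prodMk (hasDerivAt_const a b)) rfl
  have hL₂ : HasDerivAt (fun y => f a y) (L (0, 1)) b :=
    hf.hasFDerivAt.comp_hasDerivAt_of_eq b
      ((hasDerivAt_const b a).prodMk (hasDerivAt_id b)) rfl
  rw [pd1, hL₁.deriv] at h₁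
  rw [pd2, hL₂.deriv] at h₂
  ext
  · simpa using h₁
  · simpa using h₂

theorem isBigO_rpow_of_tendsto_rpow_neg_mul {μ : ℝ → ℝ} {δ c : ℝ}
    (h : Tendsto (fun H => H ^ (-δ) * μ H) (𝓝[>] 0) (𝓝 c)) :
    μ =O[𝓝[>] 0] fun H => H ^ δ := by
  refine ((isBigO_refl (fun H : ℝ => H ^ δ) _).mul (h.isBigO_one ℝ)).congr' ?_
    (Eventually.of_forall fun H => mul_one _)
  filter_upwards [self_mem_nhdsWithin] with H hH
  rw [← mul_assoc, ← Real.rpow_add hH, add_neg_cancel, Real.rpow_zero, one_mul]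

theorem isBigO_sub_const_mul_rpow_of_isBigO_norm_sq {g : ℝ → ℝ → ℝ}
    (hg : (fun q : ℝ × ℝ => g q.1 q.2) =O[𝓝 0] fun q => ‖q‖ ^ 2) {μ : ℝ → ℝ} {m γ α : ℝ}
    (c : ℝ) (hα : 0 < α) (hαγ : α ≤ 2 * γ) (hαm : α ≤ m) (hμ : μ =O[𝓝[>] 0] fun H => H ^ γ) :
    (fun H => g (H ^ m) (μ H) - c * H ^ m) =O[𝓝[>] 0] fun H => H ^ α := by
  have hq : (fun H => (H ^ m, μ H)) =O[𝓝[>] 0] fun H => H ^ (α / 2) :=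
    (isBigO_rpow_rpow_nhdsGT_zero (by linarith)).prod_left
      (hμ.trans (isBigO_rpow_rpow_nhdsGT_zero (by linarith)))
  have hsq : (fun H : ℝ => (H ^ (α / 2)) ^ 2) =ᶠ[𝓝[>] 0] fun H => H ^ α := by
    filter_upwards [self_mem_nhdsWithin] with H hH
    rw [← Real.rpow_mul_natCast hH.le]
    norm_num
  have hgq := hg.comp_tendsto (hq.trans_tendsto (tendsto_rpow_nhdsGT_zero (by linarith)))
  exact (hgq.trans ((hq.norm_left.pow 2).trans hsq.isBigO)).sub
    ((isBigO_rpow_rpow_nhdsGT_zero hαm).const_mul_left c)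

theorem hasDerivAt_div_sub_one_mul_rpow_sub_one (B : ℝ) {α x : ℝ} (hα : α ≠ 1) (hx : x ≠ 0) :
    HasDerivAt (fun H => B / (α - 1) * H ^ (α - 1)) (B * x ^ (α - 2)) x := by
  refine ((Real.hasDerivAt_rpow_const (Or.inl hx)).const_mul (B / (α - 1))).congr_deriv ?_
  rw [show α - 1 - 1 = α - 2 by ring]
  field_simp [sub_ne_zero.2 hα]

section

variable {μ R : ℝ → ℝ} {ε α : ℝ}

theorem isBigO_mul_of_antideriv (hε : 0 < ε)
    (hν : ∀ H ∈ Ioo 0 ε, HasDerivAt (fun s => μ s / s) (R H / H ^ 2) H) {B : ℝ}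
    {F G : ℝ → ℝ} (hR : IsBigOWith B (𝓝[>] 0) R fun H => H ^ α)
    (hF : ∀ H ∈ Ioo 0 ε, HasDerivAt F (B * H ^ (α - 2)) H)
    (hG₁ : (fun _ => (1 : ℝ)) =O[𝓝[>] 0] G) (hFG : F =O[𝓝[>] 0] G) :
    μ =O[𝓝[>] 0] fun H => H * G H := by
  have hle : ∀ᶠ H in 𝓝[>] 0, |R H / H ^ 2| ≤ B * H ^ (α - 2) := by
    filter_upwards [hR.bound, self_mem_nhdsWithin] with H hRH (hH : 0 < H)
    rw [Real.norm_eq_abs, Real.norm_of_nonneg (Real.rpow_nonneg hH.le _)] at hRH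
    rw [abs_div, abs_of_pos (by positivity : (0 : ℝ) < H ^ 2), Real.rpow_sub hH, Real.rpow_two,
      ← mul_div_assoc]
    gcongr
  obtain ⟨C, hC⟩ := exists_abs_le_sub_of_abs_deriv_le hε hν hF hle
  have hdiv : (fun H => μ H / H) =O[𝓝[>] 0] G :=
    (IsBigO.of_bound 1 (hC.mono fun H h => by
      rw [one_mul, Real.norm_eq_abs, Real.norm_eq_abs]
      exact h.trans (le_abs_self _))).trans
      (((isBigO_const_const C one_ne_zero _).trans hG₁).sub hFG)
  refine ((isBigO_refl (fun H : ℝ => H) _).mul hdiv).congr' ?_ EventuallyEq.rfl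
  filter_upwards [self_mem_nhdsWithin] with H hH
  exact mul_div_cancel₀ _ (ne_of_gt hH)

theorem isBigO_id_of_one_lt (hε : 0 < ε)
    (hν : ∀ H ∈ Ioo 0 ε, HasDerivAt (fun s => μ s / s) (R H / H ^ 2) H) (hα : 1 < α)
    (hR : R =O[𝓝[>] 0] fun H => H ^ α) : μ =O[𝓝[>] 0] fun H => H := by
  obtain ⟨B, hB⟩ := hR.isBigOWith
  have hF : Tendsto (fun H => B / (α - 1) * H ^ (α - 1)) (𝓝[>] 0) (𝓝 0) := by
    simpa using (tendsto_rpow_nhdsGT_zero (sub_pos.2 hα)).const_mul (B / (α - 1))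
  simpa using isBigO_mul_of_antideriv hε hν hB
    (fun H hH => hasDerivAt_div_sub_one_mul_rpow_sub_one B hα.ne' hH.1.ne')
    (isBigO_refl _ _) (hF.isBigO_one ℝ)

theorem isBigO_neg_mul_log (hε : 0 < ε)
    (hν : ∀ H ∈ Ioo 0 ε, HasDerivAt (fun s => μ s / s) (R H / H ^ 2) H)
    (hR : R =O[𝓝[>] 0] fun H => H ^ (1 : ℝ)) :
    μ =O[𝓝[>] 0] fun H => -(H * Real.log H) := by
  obtain ⟨B, hB⟩ := hR.isBigOWith
  have hF : ∀ H ∈ Ioo 0 ε, HasDerivAt (fun H => B * Real.log H) (B * H ^ ((1 : ℝ) - 2)) H :=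
    fun H hH => ((Real.hasDerivAt_log hH.1.ne').const_mul B).congr_deriv (by
      norm_num [Real.rpow_neg_one])
  have hG₁ : (fun _ => (1 : ℝ)) =O[𝓝[>] 0] fun H => -Real.log H :=
    (isLittleO_const_left.2 (Or.inr (tendsto_norm_atTop_atTop.comp
      (tendsto_neg_atBot_atTop.comp Real.tendsto_log_nhdsGT_zero)))).isBigO
  simpa using isBigO_mul_of_antideriv hε hν hB hF hG₁
    ((isBigO_refl Real.log _).neg_right.const_mul_left B)

theorem isBigO_rpow_of_lt_one (hε : 0 < ε)
    (hν : ∀ H ∈ Ioo 0 ε, HasDerivAt (fun s => μ s / s) (R H / H ^ 2) H) (hα : α < 1)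
    (hR : R =O[𝓝[>] 0] fun H => H ^ α) : μ =O[𝓝[>] 0] fun H => H ^ α := by
  obtain ⟨B, hB⟩ := hR.isBigOWith
  have hG₁ : (fun _ => (1 : ℝ)) =O[𝓝[>] 0] fun H : ℝ => H ^ (α - 1) := by
    simpa using isBigO_rpow_rpow_nhdsGT_zero (a := (0 : ℝ)) (by linarith : α - 1 ≤ 0)
  refine (isBigO_mul_of_antideriv hε hν hB
    (fun H hH => hasDerivAt_div_sub_one_mul_rpow_sub_one B hα.ne hH.1.ne') hG₁
    ((isBigO_refl _ _).const_mul_left _)).congr' EventuallyEq.rfl ?_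
  filter_upwards [self_mem_nhdsWithin] with H hH
  conv_rhs => rw [show α = 1 + (α - 1) by ring, Real.rpow_add hH, Real.rpow_one]

end

theorem unstable_manifold_solution_bounds_general (n k ε : ℝ) (hn : n ∈ Set.Ioo (0 : ℝ) 3)
    (hε : 0 < ε)
    (g : ℝ → ℝ → ℝ) (U : Set (ℝ × ℝ)) (hU : U ∈ 𝓝 ((0, 0) : ℝ × ℝ))
    (hanal : ∀ x ∈ U, AnalyticAt ℝ (fun y : ℝ × ℝ => g y.1 y.2) x)
    (hg0 : g 0 0 = 0) (hg1 : pd1 g 0 0 = 0) (hg2 : pd2 g 0 0 = 0)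
    (μ : ℝ → ℝ) (hμreg : ContDiffOn ℝ 1 μ (Set.Ioo 0 ε))
    (hode : ∀ H ∈ Set.Ioo (0 : ℝ) ε,
      H * deriv μ H - μ H
        = g (H ^ (3 - n)) (μ H) - 2 / (3 * k ^ 3 * (3 - n)) * H ^ (3 - n))
    (hδ : ∃ δ > (0 : ℝ), Tendsto (fun H => H ^ (-δ) * μ H) (𝓝[>] (0 : ℝ)) (𝓝 0)) :
    (n < 2 → μ =O[𝓝[>] (0 : ℝ)] fun H => H) ∧
    (n = 2 → μ =O[𝓝[>] (0 : ℝ)] fun H => -(H * Real.log H)) ∧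
    (2 < n → μ =O[𝓝[>] (0 : ℝ)] fun H => H ^ (3 - n)) := by
  have hν : ∀ H ∈ Ioo 0 ε, HasDerivAt (fun s => μ s / s)
      ((g (H ^ (3 - n)) (μ H) - 2 / (3 * k ^ 3 * (3 - n)) * H ^ (3 - n)) / H ^ 2) H := by
    intro H hH
    have hμ := ((hμreg.differentiableOn one_ne_zero).differentiableAt
      (isOpen_Ioo.mem_nhds hH)).hasDerivAt
    refine (hμ.div (hasDerivAt_id H) hH.1.ne').congr_deriv ?_
    rw [← hode H hH]
    simp only [id, mul_one]
    ring
  have hg : (fun q : ℝ × ℝ => g q.1 q.2) =O[𝓝 0] fun q => ‖q‖ ^ 2 :=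
    have hga := hanal 0 (mem_of_mem_nhds hU)
    hga.isBigO_norm_sq hg0 (fderiv_uncurry_eq_zero hga.differentiableAt hg1 hg2)
  have hR : ∀ {γ α}, 0 < α → α ≤ 2 * γ → α ≤ 3 - n → (μ =O[𝓝[>] 0] fun H => H ^ γ) →
      (fun H => g (H ^ (3 - n)) (μ H) - 2 / (3 * k ^ 3 * (3 - n)) * H ^ (3 - n))
        =O[𝓝[>] 0] fun H => H ^ α :=
    isBigO_sub_const_mul_rpow_of_isBigO_norm_sq hg _
  obtain ⟨δ, hδ, hμδ⟩ := hδ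
  have hboot : ∀ β < 1, β ≤ 3 - n → μ =O[𝓝[>] 0] fun H => H ^ β := fun β hβ₁ hβn =>
    Antitone.of_doubling (P := fun γ => μ =O[𝓝[>] 0] fun H => H ^ γ)
      (fun _ _ hab hμ => hμ.trans (isBigO_rpow_rpow_nhdsGT_zero hab)) hδ
      (isBigO_rpow_of_tendsto_rpow_neg_mul hμδ) fun γ hγ hγβ hμ =>
        isBigO_rpow_of_lt_one hε hν (by linarith) (hR (by positivity) le_rfl (by linarith) hμ)
  have hn₃ : 0 < 3 - n := by linarith [hn.2]
  refine ⟨fun hn₂ => ?_, fun hn₂ => ?_, fun hn₂ => ?_⟩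
  · exact isBigO_id_of_one_lt (α := min (3 / 2) (3 - n)) hε hν
      (lt_min (by norm_num) (by linarith))
      (hR (γ := 3 / 4) (by positivity) ((min_le_left _ _).trans (by norm_num)) (min_le_right _ _)
        (hboot _ (by norm_num) (by linarith)))
  · exact isBigO_neg_mul_log hε hν
      (hR (γ := 1 / 2) one_pos (by norm_num) (by linarith) (hboot _ (by norm_num) (by linarith)))
  · exact isBigO_rpow_of_lt_one hε hν (by linarith)
      (hR (γ := (3 - n) / 2) hn₃ (by linarith) le_rfl (hboot _ (by linarith) (by linarith)))

/-- A priori bounds as `H ↓ 0` for solutions `μ` of the first-order ODE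
`H·μ'(H) − μ(H) = g(H^{3−n}, μ(H)) − (2/(3k³(3−n)))·H^{3−n}` on the unstable manifold,
with `g` real-analytic near `(0,0)` and vanishing together with its first partial
derivatives, provided `H^{−δ}·μ(H) → 0` as `H ↓ 0` for some `δ > 0`:
`μ = O(H)` if `0 < n < 2`, `μ = O(−H ln H)` if `n = 2`, `μ = O(H^{3−n})` if `2 < n < 3`. -/
theorem unstable_manifold_solution_bounds (n k ε : ℝ) (hn : n ∈ Set.Ioo (0 : ℝ) 3)
    (hk : 0 < k) (hε : 0 < ε)
    (g : ℝ → ℝ → ℝ) (U : Set (ℝ × ℝ)) (hU : U ∈ 𝓝 ((0, 0) : ℝ × ℝ))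
    (hanal : ∀ x ∈ U, AnalyticAt ℝ (fun y : ℝ × ℝ => g y.1 y.2) x)
    (hg0 : g 0 0 = 0) (hg1 : pd1 g 0 0 = 0) (hg2 : pd2 g 0 0 = 0)
    (μ : ℝ → ℝ) (hμreg : ContDiffOn ℝ 1 μ (Set.Ioo 0 ε))
    (hdom : ∀ H ∈ Set.Ioo (0 : ℝ) ε, (H ^ (3 - n), μ H) ∈ U)
    (hode : ∀ H ∈ Set.Ioo (0 : ℝ) ε,
      H * deriv μ H - μ H
        = g (H ^ (3 - n)) (μ H) - 2 / (3 * k ^ 3 * (3 - n)) * H ^ (3 - n))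
    (hδ : ∃ δ > (0 : ℝ), Tendsto (fun H => H ^ (-δ) * μ H) (𝓝[>] (0 : ℝ)) (𝓝 0)) :
    (n < 2 → μ =O[𝓝[>] (0 : ℝ)] fun H => H) ∧
    (n = 2 → μ =O[𝓝[>] (0 : ℝ)] fun H => -(H * Real.log H)) ∧
    (2 < n → μ =O[𝓝[>] (0 : ℝ)] fun H => H ^ (3 - n)) :=
  unstable_manifold_solution_bounds_general n k ε hn hε g U hU hanal hg0 hg1 hg2 μ hμreg hode hδ
end

section
/- Let n ∈ (0,3) and k > 0, and let ψ be a classical solution of the traveling-wave boundary-value problem (positive and twice continuously differentiable on (0,∞), right-continuous at H = 0, satisfying ψ''(H) + (2/3)·(H² + H^{n−1})^{−1}·ψ(H)^{−1/2} = 0 for all H > 0, ψ(0) = k², and ψ'(H) → 0 as H → ∞). Suppose η : [0,∞) → ℝ is twice continuously differentiable on (0,∞), right-continuous at H = 0, and satisfies η''(H) − (1/3)·(H² + H^{n−1})^{−1}·ψ(H)^{−3/2}·η(H) = 0 for all H > 0, η(0) = 0, and η'(H) → 0 as H → ∞. Then η(H) = 0 for all H ≥ 0. -/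
open Filter Topology Set

/-- Any solution of `η'' = c η` with `c > 0` on `(0,∞)`, vanishing at `0` and with
derivative tending to `0` at infinity, is nonpositive on `(0,∞)`. -/
lemma aux_nonpos (c η : ℝ → ℝ) (hc : ∀ H > (0:ℝ), 0 < c H)
    (hreg : ContDiffOn ℝ 2 η (Set.Ioi 0))
    (hcont : ContinuousWithinAt η (Set.Ici 0) 0)
    (hode : ∀ H > (0:ℝ), deriv (deriv η) H = c H * η H)
    (h0 : η 0 = 0)
    (hinf : Tendsto (deriv η) atTop (𝓝 0)) :
    ∀ a > (0:ℝ), η a ≤ 0 := by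
  have hηc : ContinuousOn η (Set.Ioi 0) := hreg.continuousOn
  have hd1 : ContinuousOn (deriv η) (Set.Ioi 0) :=
    hreg.continuousOn_deriv_of_isOpen isOpen_Ioi (by norm_num)
  intro a ha
  by_contra hcon
  push_neg at hcon
  -- Step 1: if η > 0 at a point with nonnegative derivative, η stays positive forward.
  have pos_fwd : ∀ b, 0 < b → 0 < η b → 0 ≤ deriv η b → ∀ t, b ≤ t → 0 < η t := by
    intro b hb hηb hdb t hbt
    by_contra ht
    push_neg at ht
    set S : Set ℝ := Set.Icc b t ∩ η ⁻¹' Set.Iic 0 with hS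
    have hIcc : Set.Icc b t ⊆ Set.Ioi 0 := fun x hx => lt_of_lt_of_le hb hx.1
    have hScl : IsClosed S :=
      (hηc.mono hIcc).preimage_isClosed_of_isClosed isClosed_Icc isClosed_Iic
    have hScpt : IsCompact S :=
      isCompact_Icc.of_isClosed_subset hScl Set.inter_subset_left
    have hSne : S.Nonempty := ⟨t, ⟨hbt, le_rfl⟩, ht⟩
    have ht₀ : sInf S ∈ S := hScpt.sInf_mem hSne
    set t₀ := sInf S with ht₀def
    have hbt₀ : b < t₀ := by
      rcases lt_or_eq_of_le ht₀.1.1 with h | h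
      · exact h
      · exfalso; rw [← h] at ht₀; exact absurd ht₀.2 (not_le.2 hηb)
    have hbdd : BddBelow S := ⟨b, fun x hx => hx.1.1⟩
    have hpos' : ∀ s ∈ Set.Ico b t₀, 0 < η s := by
      intro s hs
      by_contra hns
      push_neg at hns
      have : s ∈ S := ⟨⟨hs.1, hs.2.le.trans ht₀.1.2⟩, hns⟩
      exact absurd (csInf_le hbdd this) (not_le.2 hs.2)
    have hsub : Set.Icc b t₀ ⊆ Set.Ioi 0 := fun x hx => lt_of_lt_of_le hb hx.1
    have SMd : StrictMonoOn (deriv η) (Set.Icc b t₀) := by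
      apply strictMonoOn_of_deriv_pos (convex_Icc _ _) (hd1.mono hsub)
      intro x hx
      rw [interior_Icc] at hx
      rw [hode x (hb.trans hx.1)]
      exact mul_pos (hc x (hb.trans hx.1)) (hpos' x ⟨hx.1.le, hx.2⟩)
    have SMη : StrictMonoOn η (Set.Icc b t₀) := by
      apply strictMonoOn_of_deriv_pos (convex_Icc _ _) (hηc.mono hsub)
      intro x hx
      rw [interior_Icc] at hx
      have : deriv η b < deriv η x :=
        SMd ⟨le_rfl, hbt₀.le⟩ ⟨hx.1.le, hx.2.le⟩ hx.1
      linarith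
    have : η b < η t₀ := SMη ⟨le_rfl, hbt₀.le⟩ ⟨hbt₀.le, le_rfl⟩ hbt₀
    have : (0:ℝ) < η t₀ := lt_trans hηb this
    exact absurd ht₀.2 (not_le.2 this)
  rcases le_or_gt 0 (deriv η a) with hda | hda
  · -- forward case: η stays positive, η' strictly increasing, contradicting η' → 0
    have hpos : ∀ t, a ≤ t → 0 < η t := pos_fwd a ha hcon hda
    have SM : StrictMonoOn (deriv η) (Set.Ici a) := by
      apply strictMonoOn_of_deriv_pos (convex_Ici _)
        (hd1.mono fun x hx => lt_of_lt_of_le ha hx)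
      intro x hx
      rw [interior_Ici] at hx
      rw [hode x (ha.trans hx)]
      exact mul_pos (hc x (ha.trans hx)) (hpos x (le_of_lt hx))
    set m := deriv η (a + 1) with hm
    have hm0 : 0 < m := by
      have := SM (Set.self_mem_Ici) (by simp : a + 1 ∈ Set.Ici a) (by linarith)
      linarith
    have hge : ∀ t, a + 1 ≤ t → m ≤ deriv η t := by
      intro t htt
      rcases eq_or_lt_of_le htt with h | h
      · rw [← h]
      · exact (SM (by simp : a + 1 ∈ Set.Ici a) (by simp only [Set.mem_Ici]; linarith) h).le
    have h1 := hinf.eventually_lt_const hm0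
    have h2 := eventually_ge_atTop (a + 1)
    rcases (h1.and h2).exists with ⟨x, hx1, hx2⟩
    exact absurd (hge x hx2) (not_le.2 hx1)
  · -- backward case: η exceeds η a near 0, contradicting η(0) = 0
    have key : ∀ t, t ∈ Set.Ioo (0:ℝ) a → η a < η t := by
      intro t htmem
      obtain ⟨ht0, hta⟩ := htmem
      -- positivity on [t, a]
      have hpos : ∀ s ∈ Set.Icc t a, 0 < η s := by
        by_contra hns
        push_neg at hns
        obtain ⟨s₁, hs₁mem, hs₁⟩ := hns
        set S : Set ℝ := Set.Icc t a ∩ η ⁻¹' Set.Iic 0 with hS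
        have hIcc : Set.Icc t a ⊆ Set.Ioi 0 := fun x hx => lt_of_lt_of_le ht0 hx.1
        have hScl : IsClosed S :=
          (hηc.mono hIcc).preimage_isClosed_of_isClosed isClosed_Icc isClosed_Iic
        have hScpt : IsCompact S :=
          isCompact_Icc.of_isClosed_subset hScl Set.inter_subset_left
        have hSne : S.Nonempty := ⟨s₁, hs₁mem, hs₁⟩
        have hs₀ : sSup S ∈ S := hScpt.sSup_mem hSne
        set s₀ := sSup S with hs₀def
        have hs₀a : s₀ < a := by
          rcases lt_or_eq_of_le hs₀.1.2 with h | h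
          · exact h
          · exfalso; rw [h] at hs₀; exact absurd hs₀.2 (not_le.2 hcon)
        have hbdd : BddAbove S := ⟨a, fun x hx => hx.1.2⟩
        have hpos' : ∀ s ∈ Set.Ioc s₀ a, 0 < η s := by
          intro s hs
          by_contra hns2
          push_neg at hns2
          have : s ∈ S := ⟨⟨hs₀.1.1.trans hs.1.le, hs.2⟩, hns2⟩
          exact absurd (le_csSup hbdd this) (not_le.2 hs.1)
        have hsub : Set.Icc s₀ a ⊆ Set.Ioi 0 :=
          fun x hx => lt_of_lt_of_le (lt_of_lt_of_le ht0 hs₀.1.1) hx.1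
        have SMd : StrictMonoOn (deriv η) (Set.Icc s₀ a) := by
          apply strictMonoOn_of_deriv_pos (convex_Icc _ _) (hd1.mono hsub)
          intro x hx
          rw [interior_Icc] at hx
          have hx0 : (0:ℝ) < x := lt_of_lt_of_le ht0 (hs₀.1.1.trans hx.1.le)
          rw [hode x hx0]
          exact mul_pos (hc x hx0) (hpos' x ⟨hx.1, hx.2.le⟩)
        have SAη : StrictAntiOn η (Set.Icc s₀ a) := by
          apply strictAntiOn_of_deriv_neg (convex_Icc _ _) (hηc.mono hsub)
          intro x hx
          rw [interior_Icc] at hx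
          have : deriv η x < deriv η a :=
            SMd ⟨hx.1.le, hx.2.le⟩ ⟨hs₀a.le, le_rfl⟩ hx.2
          linarith
        have : η a < η s₀ := SAη ⟨le_rfl, hs₀a.le⟩ ⟨hs₀a.le, le_rfl⟩ hs₀a
        have : (0:ℝ) < η s₀ := lt_trans hcon this
        exact absurd hs₀.2 (not_le.2 this)
      -- η strictly decreasing on [t, a]
      have hsub : Set.Icc t a ⊆ Set.Ioi 0 := fun x hx => lt_of_lt_of_le ht0 hx.1
      have SMd : StrictMonoOn (deriv η) (Set.Icc t a) := by
        apply strictMonoOn_of_deriv_pos (convex_Icc _ _) (hd1.mono hsub)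
        intro x hx
        rw [interior_Icc] at hx
        have hx0 : (0:ℝ) < x := lt_of_lt_of_le ht0 hx.1.le
        rw [hode x hx0]
        exact mul_pos (hc x hx0) (hpos x ⟨hx.1.le, hx.2.le⟩)
      have SAη : StrictAntiOn η (Set.Icc t a) := by
        apply strictAntiOn_of_deriv_neg (convex_Icc _ _) (hηc.mono hsub)
        intro x hx
        rw [interior_Icc] at hx
        have : deriv η x < deriv η a :=
          SMd ⟨hx.1.le, hx.2.le⟩ ⟨hta.le, le_rfl⟩ hx.2
        linarith
      exact SAη ⟨le_rfl, hta.le⟩ ⟨hta.le, le_rfl⟩ hta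
    -- take the limit as t → 0⁺
    have hlim : Tendsto η (𝓝[>] (0:ℝ)) (𝓝 0) := by
      have := hcont.mono (Set.Ioi_subset_Ici le_rfl)
      rw [ContinuousWithinAt, h0] at this
      exact this
    have hev : ∀ᶠ t in 𝓝[>] (0:ℝ), η a ≤ η t := by
      filter_upwards [Ioo_mem_nhdsGT_of_mem ⟨le_rfl, ha⟩] with t ht
      exact (key t ht).le
    have : η a ≤ 0 := ge_of_tendsto hlim hev
    linarith

/-- Uniqueness for the linearized problem: any solution `η` of the linearization
`η'' − (1/3)(H² + H^{n−1})⁻¹ψ^{−3/2}η = 0` around a classical traveling-wave solution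
`ψ`, with `η(0) = 0` and `η'(H) → 0` as `H → ∞`, vanishes identically on `[0,∞)`. -/
theorem linearized_uniqueness (n k : ℝ) (hn : n ∈ Set.Ioo (0 : ℝ) 3) (hk : 0 < k)
    (ψ : ℝ → ℝ) (hψ : IsClassicalTWSolution n k ψ)
    (η : ℝ → ℝ)
    (hreg : ContDiffOn ℝ 2 η (Set.Ioi 0))
    (hcont : ContinuousWithinAt η (Set.Ici 0) 0)
    (hode : ∀ H > (0 : ℝ),
      deriv (deriv η) H
        - 1 / 3 * (H ^ 2 + H ^ (n - 1))⁻¹ * ψ H ^ (-(3 / 2) : ℝ) * η H = 0)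
    (h0 : η 0 = 0)
    (hinf : Tendsto (deriv η) atTop (𝓝 0)) :
    ∀ H ≥ (0 : ℝ), η H = 0 := by
  obtain ⟨hψpos, -, -, -, -, -⟩ := hψ
  set c : ℝ → ℝ := fun H => 1 / 3 * (H ^ 2 + H ^ (n - 1))⁻¹ * ψ H ^ (-(3 / 2) : ℝ) with hcdef
  have hc : ∀ H > (0:ℝ), 0 < c H := by
    intro H hH
    have h1 : (0:ℝ) < H ^ 2 := by positivity
    have h2 : (0:ℝ) < H ^ (n - 1) := Real.rpow_pos_of_pos hH _
    have h3 : (0:ℝ) < ψ H := hψpos H hH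
    have h4 : (0:ℝ) < ψ H ^ (-(3 / 2) : ℝ) := Real.rpow_pos_of_pos h3 _
    have h5 : (0:ℝ) < (H ^ 2 + H ^ (n - 1))⁻¹ := by positivity
    simp only [hcdef]
    positivity
  have hode' : ∀ H > (0:ℝ), deriv (deriv η) H = c H * η H := by
    intro H hH
    have := hode H hH
    simp only [hcdef]
    linarith
  have h1 : ∀ a > (0:ℝ), η a ≤ 0 := aux_nonpos c η hc hreg hcont hode' h0 hinf
  have hder_neg : deriv (fun x => -η x) = fun x => -deriv η x := funext fun x => deriv.neg
  have h2 : ∀ a > (0:ℝ), -η a ≤ 0 := by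
    apply aux_nonpos c (fun x => -η x) hc hreg.neg hcont.neg
    · intro H hH
      rw [hder_neg]
      have : deriv (fun x => -deriv η x) H = -deriv (deriv η) H := deriv.neg
      rw [this, hode' H hH]
      ring
    · simp [h0]
    · rw [hder_neg]
      simpa using hinf.neg
  intro H hH
  rcases eq_or_lt_of_le hH with h | h
  · rw [← h]; exact h0
  · exact le_antisymm (h1 H h) (by have := h2 H h; linarith)
end
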